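/- arXiv:1911.08702 — 10 statements merged into one kernel-verified Lean document; each statement's English description precedes it below -/
import Mathlib

section
/- Euler's Pentagonal Number Theorem: ∏_{m=1}^{∞}(1 - q^m) = 1 + ∑_{l=1}^{∞} (-1)^l (q^{l(3l-1)/2} + q^{l(3l+1)/2}) as formal power series. -/
/-!
Mathlib identifies `∏ (1 - X ^ (m + 1))` with `pentagonalSeries`, the sum of `(-1) ^ k X ^ pentagonal k`
over `k : ℤ`. Both sides of the theorem are truncations of these two series which do not change the
coefficient of `X ^ n`: a factor `1 - X ^ (m + 1)` with `m ≥ n` is `1` modulo `X ^ (n + 1)`, and a term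
with `|k| > n` has `pentagonal k ≥ |k| > n`.
-/

open PowerSeries Finset Filter

theorem pentagonal_natCast (k : ℕ) : pentagonal k = k * (3 * k - 1) / 2 := by
  rcases k with _ | k
  · rfl
  zify [natCast_pentagonal, show 1 ≤ 3 * (k + 1) by omega]

theorem pentagonal_neg_natCast (k : ℕ) : pentagonal (-k) = k * (3 * k + 1) / 2 := by
  zify [natCast_pentagonal]
  ring_nf

theorem natAbs_le_pentagonal (k : ℤ) : k.natAbs ≤ pentagonal k := by
  have := two_mul_natCast_pentagonal k
  zify
  rcases le_or_gt k 0 with hk | hk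
  · rw [abs_of_nonpos hk]; nlinarith
  · rw [abs_of_pos hk]; nlinarith

namespace PowerSeries

variable {R : Type*} [CommRing R]

theorem coeff_X_pow_mul_of_lt {n e : ℕ} (h : n < e) (f : R⟦X⟧) : coeff n (X ^ e * f) = 0 := by
  rw [coeff_X_pow_mul', if_neg (not_le.2 h)]

theorem coeff_prod_one_sub_X_pow_mul {ι : Type*} {n : ℕ} {s : Finset ι} {e : ι → ℕ}
    (h : ∀ i ∈ s, n < e i) (f : R⟦X⟧) : coeff n ((∏ i ∈ s, (1 - X ^ e i)) * f) = coeff n f := by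
  classical
  induction s using Finset.induction_on with
  | empty => simp
  | insert a s ha ih =>
    rw [prod_insert ha, mul_assoc, sub_mul, one_mul, map_sub,
      coeff_X_pow_mul_of_lt (h a (mem_insert_self a s)), sub_zero,
      ih fun i hi ↦ h i (mem_insert_of_mem hi)]

theorem coeff_prod_range_one_sub_X_pow (n : ℕ) :
    coeff n (∏ m ∈ range (n + 1), (1 - X ^ (m + 1) : R⟦X⟧)) = coeff n (pentagonalSeries R) := by
  obtain ⟨s, hs⟩ := eventually_atTop.1 (coeff_prod_one_sub_X_pow_eventually_eq R n)
  rw [← hs (s ∪ range (n + 1)) subset_union_left, ← prod_sdiff subset_union_right,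
    coeff_prod_one_sub_X_pow_mul]
  intro m hm
  simp only [Finset.mem_sdiff, Finset.mem_range] at hm
  omega

theorem coeff_neg_one_pow_mul_X_pow_pentagonal_neg {n k : ℕ} (h : n < k) :
    coeff n ((-1) ^ k * X ^ pentagonal (-k) : R⟦X⟧) = 0 := by
  rw [mul_comm, coeff_X_pow_mul_of_lt]
  have := natAbs_le_pentagonal (-k)
  rw [Int.natAbs_neg, Int.natAbs_natCast] at this
  omega

open scoped WithPiTopology in
theorem coeff_pentagonalSeries_eq_coeff_sum_range {n N : ℕ} (h : n < N) :
    coeff n (pentagonalSeries R) =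
      coeff n (∑ k ∈ range N, (-1) ^ k * (X ^ pentagonal (-k) - X ^ pentagonal (k + 1) : R⟦X⟧)) := by
  let : TopologicalSpace R := ⊥
  have : DiscreteTopology R := ⟨rfl⟩
  have hsum := (WithPiTopology.hasSum_pow_pentagonal_sub_pentagonalSeries R).map (coeff n)
    (WithPiTopology.continuous_coeff R n)
  rw [map_sum]
  refine hsum.unique (hasSum_sum_of_ne_finset_zero fun k hk ↦ ?_)
  have hnk : n < k := h.trans_le (by simpa using hk)
  have hk1 : n < pentagonal (k + 1) := by
    have := natAbs_le_pentagonal ((k + 1 : ℕ) : ℤ)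
    push_cast at this
    omega
  rw [Function.comp_apply, mul_sub, map_sub, coeff_neg_one_pow_mul_X_pow_pentagonal_neg hnk,
    mul_comm, coeff_X_pow_mul_of_lt hk1, sub_zero]

theorem one_add_sum_range_X_pow_pentagonal (N : ℕ) :
    (1 + ∑ l ∈ range N, (-1) ^ (l + 1) *
        (X ^ pentagonal (l + 1 : ℕ) + X ^ pentagonal (-(l + 1 : ℕ))) : R⟦X⟧) =
      ∑ k ∈ range N, (-1) ^ k * (X ^ pentagonal (-k) - X ^ pentagonal (k + 1)) +
        (-1) ^ N * X ^ pentagonal (-N) := by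
  induction N with
  | zero => simp [pentagonal_def]
  | succ N ih =>
    rw [sum_range_succ, ← add_assoc, ih, sum_range_succ]
    push_cast
    ring

end PowerSeries

/-- Euler's Pentagonal Number Theorem:
`∏_{m=1}^∞ (1 - q^m) = 1 + ∑_{l=1}^∞ (-1)^l (q^{l(3l-1)/2} + q^{l(3l+1)/2})`,
stated coefficientwise (truncating the product and the sum, which does not affect
the coefficient of `q^n`). -/
theorem pentagonal_number_theorem :
    ∀ n : ℕ,
      (PowerSeries.coeff (R := ℤ) n) (∏ m ∈ Finset.range (n + 1), (1 - (X : PowerSeries ℤ) ^ (m + 1))) =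
      (PowerSeries.coeff (R := ℤ) n) (1 + ∑ l ∈ Finset.range (n + 1),
        ((-1 : PowerSeries ℤ) ^ (l + 1) *
          ((X : PowerSeries ℤ) ^ ((l + 1) * (3 * (l + 1) - 1) / 2) +
           (X : PowerSeries ℤ) ^ ((l + 1) * (3 * (l + 1) + 1) / 2)))) := by
  intro n
  simp only [← pentagonal_natCast, ← pentagonal_neg_natCast]
  rw [coeff_prod_range_one_sub_X_pow, one_add_sum_range_X_pow_pentagonal, map_add,
    coeff_neg_one_pow_mul_X_pow_pentagonal_neg n.lt_succ_self, add_zero,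
    coeff_pentagonalSeries_eq_coeff_sum_range n.lt_succ_self]
end

section
/- For every positive integer n, the number of partitions of n into an even number of distinct parts minus the number of partitions of n into an odd number of distinct parts equals (-1)^l if n = l(3l-1)/2 or n = l(3l+1)/2 for some positive integer l, and equals 0 otherwise. -/
/-!
Expanding `∏ k ≥ 1, (1 - X ^ k)` picks each part `k` at most once, with a sign per part, so the
coefficient of `X ^ n` is the signed count of partitions of `n` into distinct parts. Euler's
pentagonal number theorem identifies the product with `∑ k : ℤ, (-1) ^ k X ^ (k(3k-1)/2)`; for
`n > 0` the index `k` is nonzero, and `k = l`, `k = -l` give the two families `l(3l ∓ 1)/2`.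
-/

open Finset PowerSeries PowerSeries.WithPiTopology

theorem Finset.card_filter_even_sub_card_filter_not_even {α : Type*} (s : Finset α)
    (g : α → ℕ) :
    (#{x ∈ s | Even (g x)} : ℤ) - #{x ∈ s | ¬ Even (g x)} = ∑ x ∈ s, (-1 : ℤ) ^ g x := by
  rw [← sum_filter_add_sum_filter_not s (fun x ↦ Even (g x)),
    sum_congr rfl fun x hx ↦ (mem_filter.1 hx).2.neg_one_pow,
    sum_congr rfl fun x hx ↦ (Nat.not_even_iff_odd.1 (mem_filter.1 hx).2).neg_one_pow]
  simp [sub_eq_add_neg]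

theorem two_mul_pentagonal_natCast (l : ℕ) : 2 * pentagonal l = l * (3 * l - 1) := by
  have h := two_mul_natCast_pentagonal l
  rcases Nat.eq_zero_or_pos l with rfl | hl
  · simp [pentagonal]
  · zify [(by omega : 1 ≤ 3 * l)]
    exact h

theorem two_mul_pentagonal_neg_natCast (l : ℕ) : 2 * pentagonal (-l) = l * (3 * l + 1) := by
  zify
  exact two_mul_natCast_pentagonal_neg l

theorem exists_two_mul_eq_of_pentagonal_eq {k : ℤ} {n : ℕ} (hn : 0 < n) (h : pentagonal k = n) :
    ∃ l : ℕ, 0 < l ∧ (2 * n = l * (3 * l - 1) ∨ 2 * n = l * (3 * l + 1)) := by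
  subst h
  obtain ⟨l, rfl | rfl⟩ := k.eq_nat_or_neg
  · refine ⟨l, Nat.pos_of_ne_zero ?_, Or.inl (two_mul_pentagonal_natCast l)⟩
    rintro rfl
    simp [pentagonal] at hn
  · refine ⟨l, Nat.pos_of_ne_zero ?_, Or.inr (two_mul_pentagonal_neg_natCast l)⟩
    rintro rfl
    simp [pentagonal] at hn

namespace Nat.Partition

variable {R : Type*} [CommRing R]

theorem prod_toFinsupp_parts_ite_eq_one {n : ℕ} (p : n.Partition) :
    p.parts.toFinsupp.prod (fun _ c ↦ if c = 1 then (-1 : R) else 0) =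
      if p.parts.Nodup then (-1) ^ Multiset.card p.parts else 0 := by
  rw [Finsupp.prod, Multiset.toFinsupp_support, prod_ite_zero]
  simp_rw [Multiset.toFinsupp_apply, Multiset.mem_toFinset, ← Multiset.nodup_iff_count_eq_one]
  split_ifs with hnd
  · rw [prod_const, Multiset.toFinset_card_of_nodup hnd]
  · rfl

theorem hasProd_powerSeriesMk_sum_distincts_neg_one_pow_card [TopologicalSpace R] [T2Space R] :
    HasProd (fun i ↦ (1 - X ^ (i + 1) : R⟦X⟧))
      (PowerSeries.mk fun n ↦ ∑ p ∈ distincts n, (-1 : R) ^ Multiset.card p.parts) := by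
  let f : ℕ → ℕ → R := fun _ c ↦ if c = 1 then -1 else 0
  have hfactor (i : ℕ) : 1 + ∑' j, f (i + 1) (j + 1) • X ^ ((i + 1) * (j + 1)) =
      (1 - X ^ (i + 1) : R⟦X⟧) := by
    rw [tsum_eq_single 0 (fun j hj ↦ by simp [f, hj])]
    simp [f, sub_eq_add_neg]
  have hcoeff : genFun f =
      PowerSeries.mk fun n ↦ ∑ p ∈ distincts n, (-1 : R) ^ Multiset.card p.parts := by
    ext n
    simp [f, prod_toFinsupp_parts_ite_eq_one, distincts, sum_filter]
  simpa only [hfactor, hcoeff] using hasProd_genFun f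

theorem sum_distincts_neg_one_pow_card (n : ℕ) :
    ∑ p ∈ distincts n, (-1 : R) ^ Multiset.card p.parts = (pentagonalSeries R).coeff n := by
  -- Any T2 topology on `R` lets us compare the two products coefficientwise.
  let _ : TopologicalSpace R := ⊥
  have : DiscreteTopology R := ⟨rfl⟩
  rw [← hasProd_powerSeriesMk_sum_distincts_neg_one_pow_card.unique (hasProd_one_sub_X_pow R),
    coeff_mk]

end Nat.Partition

/-- The signed count of partitions of `n` into distinct parts (even length minus odd
length) is `(-1)^l` when `n = l(3l-1)/2` or `n = l(3l+1)/2` for a positive integer `l`,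
and `0` otherwise.  (The conditions are written as `2n = l(3l∓1)` to avoid division.) -/
theorem signed_distinct_partitions_count (n : ℕ) (hn : 0 < n) :
    (∀ l : ℕ, 0 < l → (2 * n = l * (3 * l - 1) ∨ 2 * n = l * (3 * l + 1)) →
      ((Finset.univ.filter fun p : n.Partition => p.parts.Nodup ∧ Even (Multiset.card p.parts)).card : ℤ) -
      ((Finset.univ.filter fun p : n.Partition => p.parts.Nodup ∧ ¬ Even (Multiset.card p.parts)).card : ℤ) =
        (-1) ^ l) ∧
    ((¬ ∃ l : ℕ, 0 < l ∧ (2 * n = l * (3 * l - 1) ∨ 2 * n = l * (3 * l + 1))) →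
      ((Finset.univ.filter fun p : n.Partition => p.parts.Nodup ∧ Even (Multiset.card p.parts)).card : ℤ) -
      ((Finset.univ.filter fun p : n.Partition => p.parts.Nodup ∧ ¬ Even (Multiset.card p.parts)).card : ℤ) =
        0) := by
  rw [← filter_filter, ← filter_filter, card_filter_even_sub_card_filter_not_even,
    ← Nat.Partition.distincts, Nat.Partition.sum_distincts_neg_one_pow_card]
  refine ⟨fun l _ hpent ↦ ?_, fun hnone ↦ ?_⟩
  · obtain h | h := hpent
    · rw [show n = pentagonal l by have := two_mul_pentagonal_natCast l; omega,
        coeff_pentagonalSeries_pentagonal, Int.coe_negOnePow_natCast, Int.cast_id]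
    · rw [show n = pentagonal (-l) by have := two_mul_pentagonal_neg_natCast l; omega,
        coeff_pentagonalSeries_pentagonal, Int.negOnePow_neg, Int.coe_negOnePow_natCast,
        Int.cast_id]
  · exact coeff_pentagonalSeries_eq_zero ℤ fun ⟨_, hk⟩ ↦
      hnone (exists_two_mul_eq_of_pentagonal_eq hn hk)
end

section
/- The identity ∏_{m=1}^{∞} 1/(1 + q^m) = 1 + ∑_{l=1}^{∞} (-1)^l q^{l^2} / ∏_{j=1}^{l} (1 - q^{2j}) holds as formal power series in q. -/
/-!
Since `(1 + q^m)(1 - q^m) = 1 - q^{2m}`, the product `∏ 1/(1 + q^m)` equals `∏ (1 - q^{2j+1})`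
(the even factors of `∏ (1 - q^m)` cancel against `∏ (1 - q^{2m})`). Cauchy's finite
`q`-binomial theorem with base `q²` and `x = -q` expands `∏_{j<K} (1 - q^{2j+1})` as
`∑_{l ≤ K} (-1)^l q^{l²} [K, l]_{q²}`, and
`[K, l]_{q²} (q²; q²)_l = ∏_{j<l} (1 - q^{2(K-l+j+1)})` is `1` up to order `2(K-l+1)`, which
together with the factor `q^{l²}` exceeds `K`. So all three expressions agree modulo `q^K`.
-/

open PowerSeries Finset

theorem Nat.two_mul_choose_two_add_self (l : ℕ) : 2 * l.choose 2 + l = l ^ 2 := by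
  induction l with
  | zero => rfl
  | succ l ih => rw [Nat.choose_succ_succ', Nat.choose_one_right]; nlinarith

theorem Finset.prod_range_two_mul {M : Type*} [CommMonoid M] (f : ℕ → M) (N : ℕ) :
    ∏ m ∈ range (2 * N), f m =
      (∏ j ∈ range N, f (2 * j)) * ∏ j ∈ range N, f (2 * j + 1) := by
  induction N with
  | zero => simp
  | succ N ih =>
    rw [Nat.mul_succ, prod_range_succ, prod_range_succ, ih, prod_range_succ, prod_range_succ]
    ac_rfl

section

variable {R : Type*}

def gaussBinom [Semiring R] (q : R) : ℕ → ℕ → R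
  | _, 0 => 1
  | 0, _ + 1 => 0
  | N + 1, k + 1 => gaussBinom q N k + q ^ (k + 1) * gaussBinom q N (k + 1)

section Semiring
variable [Semiring R] (q : R)

@[simp] theorem gaussBinom_zero_right (N : ℕ) : gaussBinom q N 0 = 1 := by
  cases N <;> rfl

theorem gaussBinom_succ_succ (N k : ℕ) :
    gaussBinom q (N + 1) (k + 1) = gaussBinom q N k + q ^ (k + 1) * gaussBinom q N (k + 1) := rfl

theorem gaussBinom_eq_zero_of_lt : ∀ {N k : ℕ}, N < k → gaussBinom q N k = 0
  | 0, _ + 1, _ => rfl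
  | N + 1, k + 1, h => by
    rw [gaussBinom_succ_succ, gaussBinom_eq_zero_of_lt (by omega),
      gaussBinom_eq_zero_of_lt (by omega), mul_zero, add_zero]

theorem gaussBinom_self : ∀ N : ℕ, gaussBinom q N N = 1
  | 0 => rfl
  | N + 1 => by
    rw [gaussBinom_succ_succ, gaussBinom_self N, gaussBinom_eq_zero_of_lt q N.lt_succ_self,
      mul_zero, add_zero]

end Semiring

theorem prod_one_add_mul_pow_eq_sum_gaussBinom [CommSemiring R] (q x : R) (N : ℕ) :
    ∏ j ∈ range N, (1 + x * q ^ j) =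
      ∑ k ∈ range (N + 1), q ^ k.choose 2 * x ^ k * gaussBinom q N k := by
  induction N generalizing x with
  | zero => simp
  | succ N ih =>
    have shift : ∀ j, x * q ^ (j + 1) = x * q * q ^ j := fun j => by ring
    set S := ∑ k ∈ range (N + 1), q ^ k.choose 2 * (x * q) ^ k * gaussBinom q N k
    have hS : ∏ j ∈ range N, (1 + x * q ^ (j + 1)) = S := by simp_rw [shift]; exact ih (x * q)
    have hlow : ∑ k ∈ range (N + 1), q ^ (k + 1).choose 2 * x ^ (k + 1) * gaussBinom q N k
        = x * S := by
      rw [mul_sum]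
      refine sum_congr rfl fun k _ => ?_
      rw [Nat.choose_succ_succ', Nat.choose_one_right]
      ring
    have hhigh : ∑ k ∈ range (N + 1),
        q ^ (k + 1).choose 2 * x ^ (k + 1) * (q ^ (k + 1) * gaussBinom q N (k + 1)) + 1 = S := by
      set g := fun k => q ^ k.choose 2 * (x * q) ^ k * gaussBinom q N k
      calc _ = ∑ k ∈ range (N + 1), g (k + 1) + g 0 := by
              simp [g, mul_pow, mul_assoc]
        _ = ∑ k ∈ range (N + 1 + 1), g k := (sum_range_succ' g (N + 1)).symm
        _ = S := by
          simp only [sum_range_succ _ (N + 1), g, gaussBinom_eq_zero_of_lt q N.lt_succ_self,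
            mul_zero, add_zero]
          rfl
    rw [prod_range_succ', hS, sum_range_succ']
    simp only [gaussBinom_succ_succ, mul_add, sum_add_distrib, hlow, gaussBinom_zero_right,
      Nat.choose_zero_succ, pow_zero, mul_one, add_assoc, hhigh]
    ring

theorem gaussBinom_add_mul_prod [CommRing R] (q : R) (N k : ℕ) :
    gaussBinom q (N + k) k * ∏ j ∈ range k, (1 - q ^ (j + 1)) =
      ∏ j ∈ range k, (1 - q ^ (N + j + 1)) := by
  induction k generalizing N with
  | zero => simp
  | succ k ih =>
    induction N with
    | zero => rw [zero_add, gaussBinom_self, one_mul]; simp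
    | succ N ihN =>
      have hA := ih (N + 1)
      have hB : gaussBinom q (N + 1 + k) (k + 1) *
          ((∏ j ∈ range k, (1 - q ^ (j + 1))) * (1 - q ^ (k + 1))) =
            (1 - q ^ (N + 1)) * ∏ j ∈ range k, (1 - q ^ (N + 1 + j + 1)) := by
        rw [← prod_range_succ, show N + 1 + k = N + (k + 1) by omega, ihN, prod_range_succ',
          mul_comm]
        simp only [add_assoc, add_comm 1, zero_add]
      rw [show N + 1 + (k + 1) = N + 1 + k + 1 by omega, gaussBinom_succ_succ, prod_range_succ,
        prod_range_succ]
      linear_combination (1 - q ^ (k + 1)) * hA + q ^ (k + 1) * hB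

theorem prod_one_add_pow_mul_prod_one_sub_pow [CommRing R] (q : R) (N : ℕ) :
    (∏ m ∈ range (2 * N), (1 + q ^ (m + 1))) *
        ((∏ j ∈ range N, (1 - q ^ (2 * j + 1))) * ∏ j ∈ range N, (1 - q ^ (2 * (j + 1)))) =
      ∏ m ∈ range (2 * N), (1 - q ^ (2 * (m + 1))) := by
  have split : ∏ m ∈ range (2 * N), (1 - q ^ (m + 1)) =
      (∏ j ∈ range N, (1 - q ^ (2 * j + 1))) * ∏ j ∈ range N, (1 - q ^ (2 * (j + 1))) := by
    rw [prod_range_two_mul]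
    rfl
  rw [← split, ← prod_mul_distrib]
  exact prod_congr rfl fun m _ => by ring

end

theorem Finset.prod_range_smodEq_of_le {A : Type*} [CommRing A] {I : Ideal A} {f : ℕ → A}
    {K M : ℕ} (hf : ∀ m, K ≤ m → f m ≡ 1 [SMOD I]) (hKM : K ≤ M) :
    ∏ m ∈ range M, f m ≡ ∏ m ∈ range K, f m [SMOD I] := by
  rw [← prod_range_mul_prod_Ico f hKM]
  calc _ ≡ (∏ m ∈ range K, f m) * ∏ m ∈ Ico K M, 1 [SMOD I] := by
        gcongr with m hm
        exact hf m (mem_Ico.1 hm).1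
    _ = _ := by rw [prod_const_one, mul_one]

namespace PowerSeries

theorem X_pow_smodEq_zero {R : Type*} [CommRing R] {K m : ℕ} (h : K ≤ m) :
    (X : R⟦X⟧) ^ m ≡ 0 [SMOD Ideal.span {X ^ K}] :=
  SModEq.zero.2 (Ideal.mem_span_singleton.2 (pow_dvd_pow X h))

theorem coeff_eq_of_smodEq {R : Type*} [CommRing R] {n : ℕ} {φ ψ : R⟦X⟧}
    (h : φ ≡ ψ [SMOD Ideal.span {X ^ (n + 1)}]) : coeff n φ = coeff n ψ := by
  rw [SModEq.sub_mem, Ideal.mem_span_singleton, X_pow_dvd_iff] at h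
  exact sub_eq_zero.1 (by simpa using h n n.lt_succ_self)

variable {k : Type*} [Field k]

theorem prod_inv_one_add_X_pow_smodEq (K : ℕ) :
    ∏ m ∈ range K, (1 + X ^ (m + 1))⁻¹ ≡
      ∏ j ∈ range K, (1 - X ^ (2 * j + 1)) [SMOD Ideal.span {(X : k⟦X⟧) ^ K}] := by
  set P' := ∏ m ∈ range K, (1 + (X : k⟦X⟧) ^ (m + 1))⁻¹
  set P := ∏ m ∈ range K, (1 + (X : k⟦X⟧) ^ (m + 1))
  set O := ∏ j ∈ range K, (1 - (X : k⟦X⟧) ^ (2 * j + 1))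
  set D := ∏ j ∈ range K, (1 - (X : k⟦X⟧) ^ (2 * (j + 1)))
  have hP : P' * P = 1 := by
    rw [← prod_mul_distrib]
    exact prod_eq_one fun m _ => PowerSeries.inv_mul_cancel _ (by simp)
  have hD : D * D⁻¹ = 1 := PowerSeries.mul_inv_cancel _ (by simp [D, map_prod])
  have hPOD : P * (O * D) ≡ D [SMOD Ideal.span {(X : k⟦X⟧) ^ K}] :=
    calc P * (O * D) ≡ (∏ m ∈ range (2 * K), (1 + (X : k⟦X⟧) ^ (m + 1))) * (O * D)
          [SMOD Ideal.span {(X : k⟦X⟧) ^ K}] := by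
          gcongr ?_ * _
          refine (prod_range_smodEq_of_le (fun m hm => ?_) (by omega)).symm
          simpa using SModEq.rfl.add (X_pow_smodEq_zero (R := k) (by omega : K ≤ m + 1))
      _ = ∏ m ∈ range (2 * K), (1 - (X : k⟦X⟧) ^ (2 * (m + 1))) :=
          prod_one_add_pow_mul_prod_one_sub_pow X K
      _ ≡ D [SMOD Ideal.span {(X : k⟦X⟧) ^ K}] := by
          refine prod_range_smodEq_of_le (fun m hm => ?_) (by omega)
          simpa using SModEq.rfl.sub (X_pow_smodEq_zero (R := k) (by omega : K ≤ 2 * (m + 1)))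
  have hPO : P * O ≡ 1 [SMOD Ideal.span {(X : k⟦X⟧) ^ K}] :=
    calc P * O = P * (O * D) * D⁻¹ := by rw [mul_assoc, mul_assoc, hD, mul_one]
      _ ≡ D * D⁻¹ [SMOD Ideal.span {(X : k⟦X⟧) ^ K}] := hPOD.mul SModEq.rfl
      _ = 1 := hD
  calc P' = P' * 1 := (mul_one _).symm
    _ ≡ P' * (P * O) [SMOD Ideal.span {(X : k⟦X⟧) ^ K}] := SModEq.rfl.mul hPO.symm
    _ = O := by rw [← mul_assoc, hP, one_mul]

theorem X_pow_sq_mul_gaussBinom_smodEq {K l : ℕ} (hl : l ≤ K) :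
    X ^ (l ^ 2) * gaussBinom (X ^ 2) K l ≡
      X ^ (l ^ 2) * (∏ j ∈ range l, (1 - X ^ (2 * (j + 1))))⁻¹
      [SMOD Ideal.span {(X : k⟦X⟧) ^ K}] := by
  obtain ⟨N, rfl⟩ : ∃ N, K = N + l := ⟨K - l, by omega⟩
  set D := ∏ j ∈ range l, (1 - (X : k⟦X⟧) ^ (2 * (j + 1)))
  set E := ∏ j ∈ range l, (1 - (X : k⟦X⟧) ^ (2 * (N + j + 1)))
  have hD : D * D⁻¹ = 1 := PowerSeries.mul_inv_cancel _ (by simp [D, map_prod])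
  have hE : gaussBinom (X ^ 2) (N + l) l * D = E := by
    have h := gaussBinom_add_mul_prod ((X : k⟦X⟧) ^ 2) N l
    simp only [← pow_mul] at h
    exact h
  have hE1 : (X : k⟦X⟧) ^ (2 * (N + 1)) ∣ E - 1 := by
    rw [← Ideal.mem_span_singleton, ← SModEq.sub_mem]
    calc E ≡ ∏ j ∈ range l, 1 [SMOD Ideal.span {(X : k⟦X⟧) ^ (2 * (N + 1))}] :=
          SModEq.prod fun j _ => by
            simpa using SModEq.rfl.sub (X_pow_smodEq_zero (R := k) (by omega))
      _ = 1 := prod_const_one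
  have hle : N + l ≤ l ^ 2 + 2 * (N + 1) := by nlinarith
  rw [SModEq.sub_mem, Ideal.mem_span_singleton,
    show X ^ (l ^ 2) * gaussBinom (X ^ 2) (N + l) l - X ^ (l ^ 2) * D⁻¹
      = X ^ (l ^ 2) * (E - 1) * D⁻¹ by
      linear_combination (X ^ (l ^ 2) * D⁻¹) * hE
        - X ^ (l ^ 2) * gaussBinom (X ^ 2) (N + l) l * hD]
  calc (X : k⟦X⟧) ^ (N + l) ∣ X ^ (l ^ 2) * X ^ (2 * (N + 1)) := by
        rw [← pow_add]; exact pow_dvd_pow X hle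
    _ ∣ X ^ (l ^ 2) * (E - 1) * D⁻¹ := (mul_dvd_mul_left _ hE1).mul_right _

theorem prod_one_sub_X_pow_odd_smodEq (K : ℕ) :
    ∏ j ∈ range K, (1 - X ^ (2 * j + 1)) ≡
      ∑ l ∈ range (K + 1),
        (-1) ^ l * X ^ (l ^ 2) * (∏ j ∈ range l, (1 - X ^ (2 * (j + 1))))⁻¹
      [SMOD Ideal.span {(X : k⟦X⟧) ^ K}] := by
  have cauchy : ∏ j ∈ range K, (1 - (X : k⟦X⟧) ^ (2 * j + 1)) =
      ∑ l ∈ range (K + 1), (-1) ^ l * (X ^ (l ^ 2) * gaussBinom (X ^ 2) K l) := by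
    have e1 : ∀ j, 1 - (X : k⟦X⟧) ^ (2 * j + 1) = 1 + -X * (X ^ 2) ^ j := fun j => by ring
    have e2 : ∀ l, (-1) ^ l * (X ^ (l ^ 2) * gaussBinom (X ^ 2) K l) =
        (X ^ 2) ^ l.choose 2 * (-X) ^ l * gaussBinom ((X : k⟦X⟧) ^ 2) K l := fun l => by
      rw [← Nat.two_mul_choose_two_add_self l]; ring
    simp_rw [e1, e2]
    exact prod_one_add_mul_pow_eq_sum_gaussBinom _ _ K
  rw [cauchy]
  refine SModEq.sum fun l hl => ?_
  rw [mul_assoc]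
  exact SModEq.rfl.mul (X_pow_sq_mul_gaussBinom_smodEq (by simpa [Nat.lt_succ_iff] using hl))

end PowerSeries

/-- Bosonic extension of Euler's pentagonal number theorem:
`∏_{m=1}^∞ 1/(1+q^m) = 1 + ∑_{l=1}^∞ (-1)^l q^{l²} / ∏_{j=1}^{l} (1-q^{2j})`,
stated coefficientwise (truncating the product and the sum, which does not affect
the coefficient of `q^n`). -/
theorem bosonic_pentagonal :
    ∀ n : ℕ,
      (PowerSeries.coeff (R := ℚ) n) (∏ m ∈ Finset.range (n + 1), (1 + (X : PowerSeries ℚ) ^ (m + 1))⁻¹) =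
      (PowerSeries.coeff (R := ℚ) n) (1 + ∑ l ∈ Finset.range (n + 1),
        ((-1 : PowerSeries ℚ) ^ (l + 1) * (X : PowerSeries ℚ) ^ ((l + 1) ^ 2) *
          (∏ j ∈ Finset.range (l + 1), (1 - (X : PowerSeries ℚ) ^ (2 * (j + 1))))⁻¹)) := by
  intro n
  apply PowerSeries.coeff_eq_of_smodEq
  have h := (PowerSeries.prod_inv_one_add_X_pow_smodEq (k := ℚ) (n + 1)).trans
    (PowerSeries.prod_one_sub_X_pow_odd_smodEq (n + 1))
  rw [sum_range_succ', add_comm _ ((-1 : ℚ⟦X⟧) ^ 0 * _ * _)] at h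
  simpa using h
end

section
/- For every positive integer n, the number of partitions of n with an even number of parts minus the number of partitions of n with an odd number of parts equals ∑ over harmonic partitions σ of n of (-1)^{length(σ)}, where a harmonic partition is one of the form ((n_1)^{n_1+2s}, (n_2)^{2t_2}, ..., (n_k)^{2t_k}) with n_1 > n_2 > ... > n_k > 0, s ≥ 0, and t_2,...,t_k ≥ 1; moreover, every harmonic partition of n has length of the same parity. -/
open Finset

/-- A partition is harmonic with largest part `a` if `a` is its largest part, the
multiplicity of `a` is `a + 2s` for some `s ≥ 0`, and every other part has even
multiplicity. -/
def IsHarmonicWithMax {n : ℕ} (a : ℕ) (p : n.Partition) : Prop :=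
  a ∈ p.parts ∧ (∀ b ∈ p.parts, b ≤ a) ∧
    a ≤ p.parts.count a ∧ Even (p.parts.count a - a) ∧
    ∀ b ∈ p.parts, b ≠ a → Even (p.parts.count b)

/-- A harmonic partition: of the form `((n₁)^{n₁+2s}, (n₂)^{2t₂}, …, (n_k)^{2t_k})`. -/
def IsHarmonic {n : ℕ} (p : n.Partition) : Prop :=
  ∃ a, IsHarmonicWithMax a p

open scoped Classical

namespace HarmonicAux
open Multiset

/-- build a partition from data -/
def mkPart (N : ℕ) (s : Multiset ℕ) (hpos : ∀ i ∈ s, 0 < i) (hsum : s.sum = N) : N.Partition :=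
  ⟨s, fun hi => hpos _ hi, hsum⟩

@[simp] lemma mkPart_parts (N s hpos hsum) : (mkPart N s hpos hsum).parts = s := rfl

/-- badness witness for the involution -/
def bad (s : Multiset ℕ) (b : ℕ) : Prop := 2 ≤ s.count b ∨ Odd (s.count (2*b))

lemma not_bad_zero {n : ℕ} (p : n.Partition) : ¬ bad p.parts 0 := by
  have h0 : p.parts.count 0 = 0 :=
    Multiset.count_eq_zero_of_notMem (fun h => (p.parts_pos h).ne rfl)
  simp [bad, h0]

lemma DO_iff_no_bad' (s : Multiset ℕ) (hpos : ∀ i ∈ s, 0 < i) :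
    (s.Nodup ∧ ∀ b ∈ s, Odd b) ↔ ∀ b, ¬ bad s b := by
  constructor
  · rintro ⟨hnd, hodd⟩ b
    rw [bad, not_or]
    constructor
    · have := (Multiset.nodup_iff_count_le_one.1 hnd) b
      omega
    · rcases Nat.eq_zero_or_pos b with rfl | hb
      · have h0 : s.count 0 = 0 :=
          Multiset.count_eq_zero_of_notMem (fun h => (hpos _ h).ne rfl)
        simp [h0]
      · have : 2*b ∉ s := by
          intro h
          have := hodd _ h
          rw [Nat.odd_iff] at this
          omega
        rw [Multiset.count_eq_zero_of_notMem this]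
        simp
  · intro h
    constructor
    · rw [Multiset.nodup_iff_count_le_one]
      intro b
      have := h b
      rw [bad, not_or] at this
      omega
    · intro b hb
      rw [Nat.odd_iff]
      by_contra he
      obtain ⟨c, rfl⟩ : ∃ c, b = 2*c := ⟨b/2, by omega⟩
      have h1 := h c
      rw [bad, not_or, Nat.not_odd_iff_even] at h1
      obtain ⟨-, h2⟩ := h1
      have h3 := h (2*c)
      rw [bad, not_or] at h3
      obtain ⟨h3, -⟩ := h3
      have hc : 1 ≤ s.count (2*c) := Multiset.one_le_count_iff_mem.2 hb
      rcases h2 with ⟨k, hk⟩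
      omega

lemma DO_iff_no_bad {n : ℕ} (p : n.Partition) :
    (p.parts.Nodup ∧ ∀ b ∈ p.parts, Odd b) ↔ ∀ b, ¬ bad p.parts b :=
  DO_iff_no_bad' p.parts (fun _ h => p.parts_pos h)

/-- the involution at the multiset level -/
def step (s : Multiset ℕ) (b : ℕ) : Multiset ℕ :=
  if Odd (s.count (2*b)) then s.erase (2*b) + Multiset.replicate 2 b
  else s - Multiset.replicate 2 b + {2*b}

lemma step_mem (s : Multiset ℕ) (b : ℕ) {x : ℕ} (hx : x ∈ step s b) :
    x ∈ s ∨ x = b ∨ x = 2*b := by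
  rw [step] at hx
  split at hx
  · rcases Multiset.mem_add.1 hx with h | h
    · exact Or.inl (Multiset.mem_of_mem_erase h)
    · exact Or.inr (Or.inl (Multiset.eq_of_mem_replicate h))
  · rcases Multiset.mem_add.1 hx with h | h
    · exact Or.inl (Multiset.mem_of_le (Multiset.sub_le_self s _) h)
    · simp at h
      omega

lemma step_sum (s : Multiset ℕ) (b : ℕ) (hb : bad s b) : (step s b).sum = s.sum := by
  rw [step]
  split
  · rename_i h
    have hmem : 2*b ∈ s := by
      rw [← Multiset.one_le_count_iff_mem]
      rcases h with ⟨k, hk⟩; omega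
    have hsum : (s.erase (2*b)).sum + 2*b = s.sum := by
      conv_rhs => rw [← Multiset.cons_erase hmem]
      rw [Multiset.sum_cons]; ring
    rw [Multiset.sum_add, Multiset.sum_replicate, smul_eq_mul]
    omega
  · rename_i h
    have h2 : 2 ≤ s.count b := by
      rcases hb with h' | h'
      · exact h'
      · exact absurd h' h
    have hle : Multiset.replicate 2 b ≤ s := Multiset.le_count_iff_replicate_le.1 h2
    have hsum : (s - Multiset.replicate 2 b).sum + 2*b = s.sum := by
      conv_rhs => rw [← tsub_add_cancel_of_le hle]
      rw [Multiset.sum_add, Multiset.sum_replicate, smul_eq_mul]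
    rw [Multiset.sum_add, Multiset.sum_singleton]
    omega

lemma step_count_split (s : Multiset ℕ) {b : ℕ} (hb : 0 < b) (ho : Odd (s.count (2*b))) (c : ℕ) :
    (step s b).count c = s.count c + (if c = b then 2 else 0) - (if c = 2*b then 1 else 0) := by
  rw [step, if_pos ho]
  have hmem : 2*b ∈ s := by
    rw [← Multiset.one_le_count_iff_mem]
    rcases ho with ⟨k, hk⟩; omega
  have h1 : 1 ≤ s.count (2*b) := Multiset.one_le_count_iff_mem.2 hmem
  rw [Multiset.count_add, Multiset.count_replicate]
  rcases eq_or_ne c (2*b) with rfl | hc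
  · rw [Multiset.count_erase_self]
    split_ifs <;> omega
  · rw [Multiset.count_erase_of_ne hc]
    split_ifs <;> omega

lemma step_count_merge (s : Multiset ℕ) {b : ℕ} (hb : 0 < b) (ho : ¬ Odd (s.count (2*b)))
    (h2 : 2 ≤ s.count b) (c : ℕ) :
    (step s b).count c = s.count c + (if c = 2*b then 1 else 0) - (if c = b then 2 else 0) := by
  rw [step, if_neg ho, Multiset.count_add, Multiset.count_sub, Multiset.count_replicate,
    Multiset.count_singleton]
  have hne : (2*b) ≠ b := by omega
  split_ifs <;> omega

lemma bad_step (s : Multiset ℕ) {b : ℕ} (hb : 0 < b) (hbad : bad s b) : bad (step s b) b := by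
  rcases em (Odd (s.count (2*b))) with ho | ho
  · left
    rw [step_count_split s hb ho b]
    split_ifs <;> omega
  · have h2 : 2 ≤ s.count b := hbad.resolve_right ho
    right
    rw [step_count_merge s hb ho h2 (2*b)]
    rw [Nat.odd_iff] at ho ⊢
    split_ifs <;> omega

lemma not_bad_step (s : Multiset ℕ) {b c : ℕ} (hb : 0 < b) (hbad : bad s b) (hc : c < b)
    (hnc : ¬ bad s c) : ¬ bad (step s b) c := by
  rw [bad, not_or] at hnc ⊢
  obtain ⟨hnc1, hnc2⟩ := hnc
  rw [Nat.not_odd_iff_even, Nat.even_iff] at hnc2 ⊢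
  rcases em (Odd (s.count (2*b))) with ho | ho
  · have h1 := step_count_split s hb ho c
    have h2 := step_count_split s hb ho (2*c)
    have hge : 1 ≤ s.count (2*b) := by rw [Nat.odd_iff] at ho; omega
    constructor
    · rw [h1]; split_ifs <;> omega
    · rw [h2]; split_ifs <;> omega
  · have hcb : 2 ≤ s.count b := hbad.resolve_right ho
    have h1 := step_count_merge s hb ho hcb c
    have h2 := step_count_merge s hb ho hcb (2*c)
    constructor
    · rw [h1]; split_ifs <;> omega
    · rw [h2]; split_ifs <;> omega

lemma step_step (s : Multiset ℕ) {b : ℕ} (hb : 0 < b) (hbad : bad s b) :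
    step (step s b) b = s := by
  rcases em (Odd (s.count (2*b))) with ho | ho
  · have h1 := step_count_split s hb ho
    have hge : 1 ≤ s.count (2*b) := by rw [Nat.odd_iff] at ho; omega
    have hb2 : ¬ Odd ((step s b).count (2*b)) := by
      rw [h1 (2*b), Nat.not_odd_iff_even, Nat.even_iff]
      rw [Nat.odd_iff] at ho
      split_ifs <;> omega
    have h2b : 2 ≤ (step s b).count b := by
      rw [h1 b]; split_ifs <;> omega
    ext c
    rw [step_count_merge _ hb hb2 h2b c, h1 c]
    rw [Nat.odd_iff] at ho
    split_ifs <;> (try subst_vars) <;> omega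
  · have hcb : 2 ≤ s.count b := hbad.resolve_right ho
    have h1 := step_count_merge s hb ho hcb
    have hb2 : Odd ((step s b).count (2*b)) := by
      rw [h1 (2*b), Nat.odd_iff]
      rw [Nat.not_odd_iff_even, Nat.even_iff] at ho
      split_ifs <;> omega
    ext c
    rw [step_count_split _ hb hb2 c, h1 c]
    rw [Nat.not_odd_iff_even, Nat.even_iff] at ho
    split_ifs <;> (try subst_vars) <;> omega

lemma step_card (s : Multiset ℕ) {b : ℕ} (hb : 0 < b) (hbad : bad s b) :
    Multiset.card (step s b) = Multiset.card s + 1 ∨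
      Multiset.card (step s b) + 1 = Multiset.card s := by
  rw [step]
  split
  · rename_i ho
    left
    have hmem : 2*b ∈ s := by
      rw [← Multiset.one_le_count_iff_mem]
      rw [Nat.odd_iff] at ho; omega
    rw [Multiset.card_add, Multiset.card_replicate, Multiset.card_erase_of_mem hmem]
    have : 1 ≤ Multiset.card s := by
      have := Multiset.count_le_card (2*b) s
      rw [Nat.odd_iff] at ho; omega
    simp only [Nat.pred_eq_sub_one]
    omega
  · rename_i ho
    right
    have h2 : 2 ≤ s.count b := hbad.resolve_right ho
    have hle : Multiset.replicate 2 b ≤ s := Multiset.le_count_iff_replicate_le.1 h2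
    rw [Multiset.card_add, Multiset.card_singleton, Multiset.card_sub hle,
      Multiset.card_replicate]
    have := Multiset.count_le_card b s
    omega

lemma step_ne (s : Multiset ℕ) {b : ℕ} (hb : 0 < b) (hbad : bad s b) : step s b ≠ s := by
  intro h
  rcases em (Odd (s.count (2*b))) with ho | ho
  · have h1 := step_count_split s hb ho (2*b)
    rw [h] at h1
    have hge : 1 ≤ s.count (2*b) := by rw [Nat.odd_iff] at ho; omega
    split_ifs at h1 <;> omega
  · have hcb : 2 ≤ s.count b := hbad.resolve_right ho
    have h1 := step_count_merge s hb ho hcb (2*b)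
    rw [h] at h1
    split_ifs at h1 <;> omega

/-- the involution at the partition level -/
noncomputable def iota {n : ℕ} (p : n.Partition) : n.Partition :=
  if H : ∃ b, bad p.parts b then
    mkPart n (step p.parts (Nat.find H))
      (by
        intro i hi
        rcases step_mem _ _ hi with h | h | h
        · exact p.parts_pos h
        · subst h
          exact Nat.pos_of_ne_zero (fun h0 => not_bad_zero p (h0 ▸ Nat.find_spec H))
        · subst h
          have : (Nat.find H) ≠ 0 := fun h0 => not_bad_zero p (h0 ▸ Nat.find_spec H)
          positivity)
      (by rw [step_sum _ _ (Nat.find_spec H)]; exact p.parts_sum)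
  else p

lemma iota_parts {n : ℕ} (p : n.Partition) (H : ∃ b, bad p.parts b) :
    (iota p).parts = step p.parts (Nat.find H) := by
  rw [iota, dif_pos H]
  rfl

lemma find_pos {n : ℕ} (p : n.Partition) (H : ∃ b, bad p.parts b) : 0 < Nat.find H :=
  Nat.pos_of_ne_zero (fun h0 => not_bad_zero p (h0 ▸ Nat.find_spec H))

lemma iota_not_DO {n : ℕ} (p : n.Partition) (H : ∃ b, bad p.parts b) :
    ∃ b, bad (iota p).parts b := by
  refine ⟨Nat.find H, ?_⟩
  rw [iota_parts p H]
  exact bad_step _ (find_pos p H) (Nat.find_spec H)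

lemma iota_find {n : ℕ} (p : n.Partition) (H : ∃ b, bad p.parts b)
    (H' : ∃ b, bad (iota p).parts b) : Nat.find H' = Nat.find H := by
  rw [Nat.find_eq_iff]
  constructor
  · rw [iota_parts p H]
    exact bad_step _ (find_pos p H) (Nat.find_spec H)
  · intro m hm
    rw [iota_parts p H]
    exact not_bad_step _ (find_pos p H) (Nat.find_spec H) hm (Nat.find_min H hm)

lemma iota_iota {n : ℕ} (p : n.Partition) (H : ∃ b, bad p.parts b) : iota (iota p) = p := by
  have H' := iota_not_DO p H
  apply Nat.Partition.ext
  rw [iota_parts (iota p) H', iota_find p H H', iota_parts p H]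
  exact step_step _ (find_pos p H) (Nat.find_spec H)

lemma iota_card {n : ℕ} (p : n.Partition) (H : ∃ b, bad p.parts b) :
    Multiset.card (iota p).parts = Multiset.card p.parts + 1 ∨
      Multiset.card (iota p).parts + 1 = Multiset.card p.parts := by
  rw [iota_parts p H]
  exact step_card _ (find_pos p H) (Nat.find_spec H)

lemma iota_ne {n : ℕ} (p : n.Partition) (H : ∃ b, bad p.parts b) : iota p ≠ p := by
  intro h
  apply step_ne p.parts (find_pos p H) (Nat.find_spec H)
  rw [← iota_parts p H, h]

/-- parity of distinct odd partitions -/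
lemma odd_sum_mod (s : Multiset ℕ) (h : ∀ b ∈ s, Odd b) :
    s.sum % 2 = (Multiset.card s) % 2 := by
  induction s using Multiset.induction with
  | empty => simp
  | cons a s ih =>
    have ha : Odd a := h a (Multiset.mem_cons_self a s)
    have ih' := ih (fun b hb => h b (Multiset.mem_cons_of_mem hb))
    rw [Nat.odd_iff] at ha
    simp only [Multiset.sum_cons, Multiset.card_cons]
    omega

lemma odd_sum_parity (s : Multiset ℕ) (h : ∀ b ∈ s, Odd b) :
    (Even s.sum ↔ Even (Multiset.card s)) := by
  have := odd_sum_mod s h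
  rw [Nat.even_iff, Nat.even_iff]
  omega

lemma sign_eq {k m : ℕ} (h : Even k ↔ Even m) : ((-1 : ℤ)) ^ k = (-1) ^ m := by
  rcases Nat.even_or_odd m with he | ho
  · rw [he.neg_one_pow, (h.2 he).neg_one_pow]
  · rw [ho.neg_one_pow, (Nat.not_even_iff_odd.1 (fun hc => (Nat.not_even_iff_odd.2 ho)
      (h.1 hc))).neg_one_pow]

lemma card_le_sum_of_pos (s : Multiset ℕ) (h : ∀ x ∈ s, 0 < x) :
    Multiset.card s ≤ s.sum := by
  induction s using Multiset.induction with
  | empty => simp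
  | cons a s ih =>
    simp only [Multiset.card_cons, Multiset.sum_cons]
    have ha := h a (Multiset.mem_cons_self a s)
    have := ih (fun x hx => h x (Multiset.mem_cons_of_mem hx))
    omega

lemma mul_card_le_sum (s : Multiset ℕ) (c : ℕ) (h : ∀ x ∈ s, c ≤ x) :
    c * Multiset.card s ≤ s.sum := by
  induction s using Multiset.induction with
  | empty => simp
  | cons a s ih =>
    simp only [Multiset.card_cons, Multiset.sum_cons]
    have ha := h a (Multiset.mem_cons_self a s)
    have := ih (fun x hx => h x (Multiset.mem_cons_of_mem hx))
    have : c * (Multiset.card s + 1) = c * Multiset.card s + c := by ring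
    omega

lemma sum_map_sub_two (s : Multiset ℕ) (h : ∀ x ∈ s, 2 ≤ x) :
    (s.map (· - 2)).sum = s.sum - 2 * Multiset.card s := by
  induction s using Multiset.induction with
  | empty => simp
  | cons a s ih =>
    simp only [Multiset.map_cons, Multiset.sum_cons, Multiset.card_cons]
    have ha := h a (Multiset.mem_cons_self a s)
    have ih' := ih (fun x hx => h x (Multiset.mem_cons_of_mem hx))
    have hs : 2 * Multiset.card s ≤ s.sum :=
      mul_card_le_sum s 2 (fun x hx => h x (Multiset.mem_cons_of_mem hx))
    omega

lemma map_sub_add_two (s : Multiset ℕ) (h : ∀ x ∈ s, 2 ≤ x) :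
    (s.map (· - 2)).map (· + 2) = s := by
  rw [Multiset.map_map]
  exact Multiset.map_congr rfl (fun x hx => by have := h x hx; simp; omega) |>.trans (Multiset.map_id s)

def Pset (a m : ℕ) : Finset (Nat.Partition m) :=
  Finset.univ.filter fun p => ∀ b ∈ p.parts, b ≤ a

lemma Pset_univ {a m : ℕ} (h : m ≤ a) : Pset a m = Finset.univ := by
  apply Finset.filter_true_of_mem
  intro p _ b hb
  calc b ≤ p.parts.sum := Multiset.le_sum_of_mem hb
    _ = m := p.parts_sum
    _ ≤ a := h

lemma Pset_zero (m : ℕ) : (Pset 0 m).card = if m = 0 then 1 else 0 := by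
  split_ifs with hm
  · subst hm
    rw [Pset_univ (le_refl 0), Finset.card_univ]
    exact Fintype.card_unique
  · convert Finset.card_empty
    apply Finset.eq_empty_of_forall_notMem
    intro p hp
    simp only [Pset, Finset.mem_filter] at hp
    apply hm
    rw [← p.parts_sum]
    apply Multiset.sum_eq_zero
    intro x hx
    have := p.parts_pos hx
    have := hp.2 x hx
    omega

lemma Pset_rec (a m : ℕ) (hm : a + 1 ≤ m) :
    (Pset (a+1) m).card = (Pset a m).card + (Pset (a+1) (m - (a+1))).card := by
  rw [← Finset.card_filter_add_card_filter_not
    (s := Pset (a+1) m) (p := fun p => (a+1) ∉ p.parts)]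
  congr 1
  · -- filter (a+1 ∉ parts) (Pset (a+1) m) = Pset a m
    congr 1
    ext p
    simp only [Pset, Finset.mem_filter, Finset.mem_univ, true_and]
    constructor
    · rintro ⟨hle, hnot⟩ b hb
      have := hle b hb
      have : b ≠ a + 1 := fun h => hnot (h ▸ hb)
      omega
    · intro h
      constructor
      · intro b hb; have := h b hb; omega
      · intro hmem
        have := h _ hmem
        omega
  · -- filter (¬ (a+1) ∉ parts) ↔ erase bijection
    apply Finset.card_bij (fun p hp => mkPart (m - (a+1)) (p.parts.erase (a+1))
      (fun i hi => p.parts_pos (Multiset.mem_of_mem_erase hi))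
      (by
        have hmem : (a+1) ∈ p.parts := not_not.1 (Finset.mem_filter.1 hp).2
        have h1 := congrArg Multiset.sum (Multiset.cons_erase hmem)
        rw [Multiset.sum_cons, p.parts_sum] at h1
        omega))
    · intro p hp
      simp only [Pset, Finset.mem_filter, Finset.mem_univ, true_and, not_not] at hp ⊢
      intro b hb
      exact hp.1 b (Multiset.mem_of_mem_erase hb)
    · intro p hp q hq hpq
      simp only [Pset, Finset.mem_filter, not_not] at hp hq
      apply Nat.Partition.ext
      have h1 : p.parts.erase (a+1) = q.parts.erase (a+1) := congrArg Nat.Partition.parts hpq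
      rw [← Multiset.cons_erase hp.2, ← Multiset.cons_erase hq.2, h1]
    · intro q hq
      simp only [Pset, Finset.mem_filter, Finset.mem_univ, true_and, not_not] at hq ⊢
      refine ⟨mkPart m ((a+1) ::ₘ q.parts) ?_ ?_, ⟨?_, ?_⟩, ?_⟩
      · intro i hi
        rcases Multiset.mem_cons.1 hi with rfl | h
        · omega
        · exact q.parts_pos h
      · rw [Multiset.sum_cons, q.parts_sum]
        omega
      · intro b hb
        rcases Multiset.mem_cons.1 hb with rfl | h
        · exact le_refl _
        · exact le_trans (hq b h) (by omega)
      · exact Multiset.mem_cons_self _ _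
      · apply Nat.Partition.ext
        simp only [mkPart_parts]
        rw [Multiset.erase_cons_head]

def Dset (a N : ℕ) : Finset (Nat.Partition N) :=
  Finset.univ.filter fun p =>
    p.parts.Nodup ∧ (∀ b ∈ p.parts, Odd b) ∧ Multiset.card p.parts = a

lemma Dset_zero (N : ℕ) : (Dset 0 N).card = if N = 0 then 1 else 0 := by
  split_ifs with hN
  · subst hN
    rw [show (Dset 0 0) = Finset.univ from ?_, Finset.card_univ]
    · exact Fintype.card_unique
    · apply Finset.filter_true_of_mem
      intro p _
      simp [Nat.Partition.partition_zero_parts]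
  · convert Finset.card_empty
    apply Finset.eq_empty_of_forall_notMem
    intro p hp
    simp only [Dset, Finset.mem_filter] at hp
    apply hN
    rw [← p.parts_sum]
    have : p.parts = 0 := Multiset.card_eq_zero.1 hp.2.2.2
    rw [this]
    rfl

lemma odd_finset_sum (n : ℕ) : ∀ t : Finset ℕ, (∀ x ∈ t, Odd x) → t.card = n →
    n^2 ≤ ∑ x ∈ t, x := by
  induction n with
  | zero => intro t _ _; positivity
  | succ k ih =>
    intro t hodd hcard
    have hne : t.Nonempty := by rw [← Finset.card_pos, hcard]; omega
    set M := t.max' hne with hMdef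
    have hM : M ∈ t := t.max'_mem hne
    have hle : ∀ x ∈ t, x ≤ M := fun x hx => t.le_max' x hx
    have hsub : t ⊆ (Finset.range (M/2 + 1)).image (fun j => 2*j+1) := by
      intro x hx
      rcases hodd x hx with ⟨j, hj⟩
      refine Finset.mem_image.2 ⟨j, Finset.mem_range.2 ?_, by omega⟩
      have := hle x hx
      omega
    have hcard2 : t.card ≤ M/2 + 1 := by
      calc t.card ≤ _ := Finset.card_le_card hsub
        _ ≤ (Finset.range (M/2 + 1)).card := Finset.card_image_le
        _ = M/2 + 1 := Finset.card_range _
    have hModd := hodd M hM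
    rw [Nat.odd_iff] at hModd
    have hMge : 2*k + 1 ≤ M := by omega
    have herase : (t.erase M).card = k := by
      rw [Finset.card_erase_of_mem hM, hcard]
      omega
    have hsum := ih (t.erase M) (fun x hx => hodd x (Finset.mem_of_mem_erase hx)) herase
    have hdec : ∑ x ∈ t, x = M + ∑ x ∈ t.erase M, x := (Finset.add_sum_erase t _ hM).symm
    rw [hdec]
    nlinarith [hsum]

lemma Dsum_lower {a N : ℕ} {p : Nat.Partition N} (hp : p ∈ Dset a N) : a^2 ≤ N := by
  simp only [Dset, Finset.mem_filter] at hp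
  obtain ⟨-, hnd, hodd, hcard⟩ := hp
  have htf : p.parts.toFinset.card = a := by
    rw [Multiset.card_toFinset, Multiset.Nodup.dedup hnd, hcard]
  have hsum : ∑ x ∈ p.parts.toFinset, x = p.parts.sum := by
    conv_rhs => rw [← Multiset.map_id' p.parts]
    rw [Finset.sum_multiset_map_count]
    exact (Finset.sum_congr rfl (fun x hx => by
      rw [Multiset.count_eq_one_of_mem hnd (Multiset.mem_toFinset.1 hx), one_smul])).symm
  calc a^2 ≤ ∑ x ∈ p.parts.toFinset, x := odd_finset_sum a p.parts.toFinset
        (fun x hx => hodd x (Multiset.mem_toFinset.1 hx)) htf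
    _ = p.parts.sum := hsum
    _ = N := p.parts_sum

lemma Dset_parity {a N : ℕ} {p : Nat.Partition N} (hp : p ∈ Dset a N) : N % 2 = a % 2 := by
  simp only [Dset, Finset.mem_filter] at hp
  obtain ⟨-, hnd, hodd, hcard⟩ := hp
  have h1 : p.parts.sum % 2 = (Multiset.card p.parts) % 2 := odd_sum_mod p.parts hodd
  rw [p.parts_sum, hcard] at h1
  exact h1

lemma sum_map_add_two (s : Multiset ℕ) :
    (s.map (· + 2)).sum = s.sum + 2 * Multiset.card s := by
  induction s using Multiset.induction with
  | empty => simp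
  | cons a s ih =>
    simp only [Multiset.map_cons, Multiset.sum_cons, Multiset.card_cons]
    omega

lemma bijA (a N : ℕ) (hN : 2*a ≤ N) :
    ((Dset a N).filter (fun p => 1 ∉ p.parts)).card = (Dset a (N - 2*a)).card := by
  have hge : ∀ (p : Nat.Partition N), p ∈ (Dset a N).filter (fun p => 1 ∉ p.parts) →
      ∀ x ∈ p.parts, 2 ≤ x := by
    intro p hp x hx
    simp only [Dset, Finset.mem_filter, Finset.mem_univ, true_and] at hp
    have hodd := hp.1.2.1 x hx
    have hpos := p.parts_pos hx
    have hne : x ≠ 1 := fun h => hp.2 (h ▸ hx)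
    omega
  apply Finset.card_bij (fun p hp => mkPart (N - 2*a) (p.parts.map (· - 2))
    (by
      intro i hi
      rcases Multiset.mem_map.1 hi with ⟨y, hy, rfl⟩
      have := hge p hp y hy
      have hodd : Odd y := by
        simp only [Dset, Finset.mem_filter, Finset.mem_univ, true_and] at hp
        exact hp.1.2.1 y hy
      rw [Nat.odd_iff] at hodd
      omega)
    (by
      rw [sum_map_sub_two p.parts (hge p hp), p.parts_sum]
      simp only [Dset, Finset.mem_filter, Finset.mem_univ, true_and] at hp
      rw [hp.1.2.2]))
  · intro p hp
    simp only [Dset, Finset.mem_filter, Finset.mem_univ, true_and, mkPart_parts]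
    have hp' := hp
    simp only [Dset, Finset.mem_filter, Finset.mem_univ, true_and] at hp'
    refine ⟨?_, ?_, ?_⟩
    · exact Multiset.Nodup.map_on
        (fun x hx y hy hxy => by have := hge p hp x hx; have := hge p hp y hy; omega)
        hp'.1.1
    · intro b hb
      rcases Multiset.mem_map.1 hb with ⟨y, hy, rfl⟩
      have h2 := hge p hp y hy
      have hodd := hp'.1.2.1 y hy
      rw [Nat.odd_iff] at hodd ⊢
      omega
    · rw [Multiset.card_map, hp'.1.2.2]
  · intro p hp q hq hpq
    have h1 : p.parts.map (· - 2) = q.parts.map (· - 2) := congrArg Nat.Partition.parts hpq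
    apply Nat.Partition.ext
    have := congrArg (Multiset.map (· + 2)) h1
    rwa [map_sub_add_two p.parts (hge p hp), map_sub_add_two q.parts (hge q hq)] at this
  · intro q hq
    simp only [Dset, Finset.mem_filter, Finset.mem_univ, true_and] at hq
    refine ⟨mkPart N (q.parts.map (· + 2))
      (by
        intro i hi
        rcases Multiset.mem_map.1 hi with ⟨y, hy, rfl⟩
        omega)
      (by rw [sum_map_add_two, q.parts_sum, hq.2.2]; omega), ?_, ?_⟩
    · simp only [Dset, Finset.mem_filter, Finset.mem_univ, true_and, mkPart_parts]
      refine ⟨⟨?_, ?_, ?_⟩, ?_⟩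
      · exact Multiset.Nodup.map (fun x y hxy => by omega) hq.1
      · intro b hb
        rcases Multiset.mem_map.1 hb with ⟨y, hy, rfl⟩
        have := hq.2.1 y hy
        rw [Nat.odd_iff] at this ⊢
        omega
      · rw [Multiset.card_map, hq.2.2]
      · intro hmem
        rcases Multiset.mem_map.1 hmem with ⟨y, hy, hy2⟩
        omega
    · apply Nat.Partition.ext
      simp only [mkPart_parts, Multiset.map_map]
      exact (Multiset.map_congr rfl (fun x hx => by simp)).trans (Multiset.map_id q.parts)

lemma bijB (a N : ℕ) (hN : 2*a + 1 ≤ N) :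
    ((Dset (a+1) N).filter (fun p => 1 ∈ p.parts)).card = (Dset a (N - (2*a+1))).card := by
  have key : ∀ (p : Nat.Partition N), p ∈ (Dset (a+1) N).filter (fun p => 1 ∈ p.parts) →
      (1 ∉ p.parts.erase 1) ∧ (∀ x ∈ p.parts.erase 1, 2 ≤ x) ∧ (∀ x ∈ p.parts.erase 1, Odd x)
        ∧ (p.parts.erase 1).sum + 1 = N ∧ Multiset.card (p.parts.erase 1) = a
        ∧ (p.parts.erase 1).Nodup := by
    intro p hp
    simp only [Dset, Finset.mem_filter, Finset.mem_univ, true_and] at hp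
    obtain ⟨⟨hnd, hodd, hcard⟩, hmem⟩ := hp
    have h1 : 1 ∉ p.parts.erase 1 := by
      have := Multiset.count_eq_one_of_mem hnd hmem
      rw [← Multiset.count_pos, Multiset.count_erase_self]
      omega
    have h2 : ∀ x ∈ p.parts.erase 1, Odd x :=
      fun x hx => hodd x (Multiset.mem_of_mem_erase hx)
    have h3 : ∀ x ∈ p.parts.erase 1, 2 ≤ x := by
      intro x hx
      have hodd' := h2 x hx
      have hpos := p.parts_pos (Multiset.mem_of_mem_erase hx)
      have : x ≠ 1 := fun h => h1 (h ▸ hx)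
      omega
    have h4 : (p.parts.erase 1).sum + 1 = N := by
      have := congrArg Multiset.sum (Multiset.cons_erase hmem)
      rw [Multiset.sum_cons, p.parts_sum] at this
      omega
    have h5 : Multiset.card (p.parts.erase 1) = a := by
      rw [Multiset.card_erase_of_mem hmem, hcard]
      rfl
    exact ⟨h1, h3, h2, h4, h5, hnd.erase 1⟩
  apply Finset.card_bij (fun p hp => mkPart (N - (2*a+1)) ((p.parts.erase 1).map (· - 2))
    (by
      intro i hi
      rcases Multiset.mem_map.1 hi with ⟨y, hy, rfl⟩
      obtain ⟨-, h3, h2, -, -, -⟩ := key p hp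
      have := h3 y hy
      have := h2 y hy
      rw [Nat.odd_iff] at this
      omega)
    (by
      obtain ⟨-, h3, -, h4, h5, -⟩ := key p hp
      rw [sum_map_sub_two _ h3, h5]
      omega))
  · intro p hp
    obtain ⟨h1, h3, h2, h4, h5, h6⟩ := key p hp
    simp only [Dset, Finset.mem_filter, Finset.mem_univ, true_and, mkPart_parts]
    refine ⟨?_, ?_, ?_⟩
    · exact Multiset.Nodup.map_on
        (fun x hx y hy hxy => by have := h3 x hx; have := h3 y hy; omega) h6
    · intro b hb
      rcases Multiset.mem_map.1 hb with ⟨y, hy, rfl⟩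
      have ho := h2 y hy
      have ht := h3 y hy
      rw [Nat.odd_iff] at ho ⊢
      omega
    · rw [Multiset.card_map, h5]
  · intro p hp q hq hpq
    obtain ⟨-, hp3, -, -, -, -⟩ := key p hp
    obtain ⟨-, hq3, -, -, -, -⟩ := key q hq
    have h1 : (p.parts.erase 1).map (· - 2) = (q.parts.erase 1).map (· - 2) :=
      congrArg Nat.Partition.parts hpq
    have := congrArg (Multiset.map (· + 2)) h1
    rw [map_sub_add_two _ hp3, map_sub_add_two _ hq3] at this
    have hpm : 1 ∈ p.parts := by
      simp only [Finset.mem_filter] at hp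
      exact hp.2
    have hqm : 1 ∈ q.parts := by
      simp only [Finset.mem_filter] at hq
      exact hq.2
    apply Nat.Partition.ext
    rw [← Multiset.cons_erase hpm, ← Multiset.cons_erase hqm, this]
  · intro q hq
    simp only [Dset, Finset.mem_filter, Finset.mem_univ, true_and] at hq
    obtain ⟨hnd, hodd, hcard⟩ := hq
    have hpos : ∀ i ∈ (1 : ℕ) ::ₘ q.parts.map (· + 2), 0 < i := by
      intro i hi
      rcases Multiset.mem_cons.1 hi with rfl | h
      · omega
      · rcases Multiset.mem_map.1 h with ⟨y, hy, rfl⟩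
        omega
    have hsum : ((1 : ℕ) ::ₘ q.parts.map (· + 2)).sum = N := by
      rw [Multiset.sum_cons, sum_map_add_two, q.parts_sum, hcard]
      omega
    refine ⟨mkPart N ((1 : ℕ) ::ₘ q.parts.map (· + 2)) hpos hsum, ?_, ?_⟩
    · simp only [Dset, Finset.mem_filter, Finset.mem_univ, true_and, mkPart_parts]
      have hnotmem : (1 : ℕ) ∉ q.parts.map (· + 2) := by
        intro hmem
        rcases Multiset.mem_map.1 hmem with ⟨y, hy, hy2⟩
        omega
      refine ⟨⟨?_, ?_, ?_⟩, Multiset.mem_cons_self _ _⟩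
      · rw [Multiset.nodup_cons]
        exact ⟨hnotmem, Multiset.Nodup.map (fun x y hxy => by omega) hnd⟩
      · intro b hb
        rcases Multiset.mem_cons.1 hb with rfl | h
        · exact odd_one
        · rcases Multiset.mem_map.1 h with ⟨y, hy, rfl⟩
          have := hodd y hy
          rw [Nat.odd_iff] at this ⊢
          omega
      · rw [Multiset.card_cons, Multiset.card_map, hcard]
    · apply Nat.Partition.ext
      simp only [mkPart_parts, Multiset.erase_cons_head, Multiset.map_map]
      exact (Multiset.map_congr rfl (fun x hx => by simp)).trans (Multiset.map_id q.parts)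

lemma odd_nodup_lower (s : Multiset ℕ) (hnd : s.Nodup) (hodd : ∀ b ∈ s, Odd b) :
    (Multiset.card s)^2 ≤ s.sum := by
  have htf : s.toFinset.card = Multiset.card s := by
    rw [Multiset.card_toFinset, Multiset.Nodup.dedup hnd]
  have hsum : ∑ x ∈ s.toFinset, x = s.sum := by
    conv_rhs => rw [← Multiset.map_id' s]
    rw [Finset.sum_multiset_map_count]
    exact (Finset.sum_congr rfl (fun x hx => by
      rw [Multiset.count_eq_one_of_mem hnd (Multiset.mem_toFinset.1 hx), one_smul])).symm
  calc (Multiset.card s)^2 ≤ ∑ x ∈ s.toFinset, x :=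
        odd_finset_sum _ s.toFinset (fun x hx => hodd x (Multiset.mem_toFinset.1 hx)) htf
    _ = s.sum := hsum

lemma Dset_no_one_empty (a N m : ℕ) (hN : N = a*a + 2*m) (hm : m < a) :
    (Dset a N).filter (fun p => 1 ∉ p.parts) = ∅ := by
  apply Finset.eq_empty_of_forall_notMem
  intro p hp
  have hp' := hp
  simp only [Dset, Finset.mem_filter, Finset.mem_univ, true_and] at hp'
  obtain ⟨⟨hnd, hodd, hcard⟩, hone⟩ := hp'
  have hge : ∀ x ∈ p.parts, 2 ≤ x := by
    intro x hx
    have h1 := hodd x hx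
    have h2 := p.parts_pos hx
    have h3 : x ≠ 1 := fun h => hone (h ▸ hx)
    omega
  set t := p.parts.map (· - 2) with ht
  have hndt : t.Nodup := Multiset.Nodup.map_on
    (fun x hx y hy hxy => by have := hge x hx; have := hge y hy; omega) hnd
  have hoddt : ∀ b ∈ t, Odd b := by
    intro b hb
    rcases Multiset.mem_map.1 hb with ⟨y, hy, rfl⟩
    have h1 := hodd y hy
    have h2 := hge y hy
    rw [Nat.odd_iff] at h1 ⊢
    omega
  have hcardt : Multiset.card t = a := by rw [ht, Multiset.card_map, hcard]
  have hlow := odd_nodup_lower t hndt hoddt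
  rw [hcardt] at hlow
  have hsumt : t.sum = N - 2*a := by
    rw [ht, sum_map_sub_two _ hge, p.parts_sum, hcard]
  rw [hsumt] at hlow
  have h2a : 2*a ≤ N := by
    have := mul_card_le_sum p.parts 2 hge
    rw [hcard, p.parts_sum] at this
    exact this
  have hfin : a^2 + 2*a ≤ N := by omega
  nlinarith [hfin]

lemma D_eq_P : ∀ N a m : ℕ, N = a*a + 2*m → (Dset a N).card = (Pset a m).card := by
  intro N
  induction N using Nat.strong_induction_on with
  | _ N ih =>
    intro a m hN
    match a with
    | 0 =>
      rw [Dset_zero, Pset_zero]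
      split_ifs <;> omega
    | (a'+1) =>
      have hsplit := Finset.card_filter_add_card_filter_not
        (s := Dset (a'+1) N) (p := fun p => 1 ∈ p.parts)
      have hB : ((Dset (a'+1) N).filter (fun p => 1 ∈ p.parts)).card = (Pset a' m).card := by
        have h1 : 2*a' + 1 ≤ N := by nlinarith
        rw [bijB a' N h1]
        have h2 : N - (2*a'+1) = a'*a' + 2*m := by nlinarith [Nat.sub_add_cancel h1]
        exact ih (N - (2*a'+1)) (by omega) a' m h2
      rcases lt_or_ge m (a'+1) with hm | hm
      · have hempty := Dset_no_one_empty (a'+1) N m hN hm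
        have hPuniv : Pset (a'+1) m = Pset a' m := by
          rw [Pset_univ (by omega), Pset_univ (by omega)]
        rw [← hsplit]
        have : ((Dset (a'+1) N).filter (fun p => ¬ 1 ∈ p.parts)).card = 0 := by
          rw [Finset.card_eq_zero]
          exact hempty
        rw [this, add_zero, hB, hPuniv]
      · have hA : ((Dset (a'+1) N).filter (fun p => ¬ 1 ∈ p.parts)).card =
            (Pset (a'+1) (m - (a'+1))).card := by
          have h1 : 2*(a'+1) ≤ N := by nlinarith
          rw [bijA (a'+1) N h1]
          have h2 : N - 2*(a'+1) = (a'+1)*(a'+1) + 2*(m - (a'+1)) := by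
            have := Nat.sub_add_cancel h1
            have hma : a'+1 ≤ m := hm
            nlinarith [Nat.sub_add_cancel hma]
          exact ih (N - 2*(a'+1)) (by omega) (a'+1) (m - (a'+1)) h2
        rw [← hsplit, hA, hB, Pset_rec a' m hm]

lemma harmonic_mod (s : Multiset ℕ) (a : ℕ) (hcnt : s.count a % 2 = a % 2)
    (hev : ∀ b ∈ s, b ≠ a → s.count b % 2 = 0) : s.sum % 2 = (Multiset.card s) % 2 := by
  have hs : s.sum = ∑ b ∈ s.toFinset, s.count b * b := by
    conv_lhs => rw [← Multiset.map_id' s]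
    rw [Finset.sum_multiset_map_count]
    exact Finset.sum_congr rfl (fun b _ => by rw [smul_eq_mul])
  have hc : Multiset.card s = ∑ b ∈ s.toFinset, s.count b :=
    (Multiset.toFinset_sum_count_eq s).symm
  rw [hs, hc, Finset.sum_nat_mod, Finset.sum_nat_mod s.toFinset 2 (fun b => s.count b)]
  congr 1
  apply Finset.sum_congr rfl
  intro b hb
  rcases eq_or_ne b a with rfl | hne
  · rw [Nat.mul_mod, hcnt]
    rcases Nat.mod_two_eq_zero_or_one b with h | h <;> rw [h] <;> simp [hcnt, h]
  · rw [Nat.mul_mod, hev b (Multiset.mem_toFinset.1 hb) hne]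
    simp

lemma harmonic_card_mod (s : Multiset ℕ) (a : ℕ) (ha : a ∈ s) (hcnt : s.count a % 2 = a % 2)
    (hev : ∀ b ∈ s, b ≠ a → s.count b % 2 = 0) : (Multiset.card s) % 2 = a % 2 := by
  have hc : Multiset.card s = ∑ b ∈ s.toFinset, s.count b :=
    (Multiset.toFinset_sum_count_eq s).symm
  rw [hc, Finset.sum_nat_mod]
  rw [Finset.sum_congr rfl (g := fun b => if b = a then a % 2 else 0) (fun b hb => ?_)]
  · rw [Finset.sum_ite_eq' s.toFinset a (fun _ => a % 2),
      if_pos (Multiset.mem_toFinset.2 ha)]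
    omega
  · show s.count b % 2 = if b = a then a % 2 else 0
    rcases eq_or_ne b a with rfl | hne
    · rw [if_pos rfl, hcnt]
    · rw [if_neg hne, hev b (Multiset.mem_toFinset.1 hb) hne]

noncomputable def Hset (a N : ℕ) : Finset (Nat.Partition N) :=
  Finset.univ.filter fun p => IsHarmonicWithMax a p

def half (s : Multiset ℕ) : Multiset ℕ :=
  ∑ b ∈ s.toFinset, Multiset.replicate (s.count b / 2) b

lemma count_half (s : Multiset ℕ) (b : ℕ) : (half s).count b = s.count b / 2 := by
  rw [half, Multiset.count_sum']
  rw [Finset.sum_eq_single b]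
  · rw [Multiset.count_replicate, if_pos rfl]
  · intro c _ hne
    rw [Multiset.count_replicate]
    split_ifs with h
    · exfalso; apply hne; omega
    · rfl
  · intro hb
    rw [Multiset.count_replicate, if_pos rfl,
      Multiset.count_eq_zero_of_notMem (fun hc => hb (Multiset.mem_toFinset.2 hc))]
    rfl

lemma Hset_card (a m N : ℕ) (ha : 0 < a) (hN : N = a*a + 2*m) :
    (Hset a N).card = (Pset a m).card := by
  symm
  apply Finset.card_bij (fun μ hμ => mkPart N (Multiset.replicate a a + (μ.parts + μ.parts))
    (by
      intro i hi
      rcases Multiset.mem_add.1 hi with h | h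
      · rw [Multiset.eq_of_mem_replicate h]; exact ha
      · rcases Multiset.mem_add.1 h with h' | h' <;> exact μ.parts_pos h')
    (by
      rw [Multiset.sum_add, Multiset.sum_add, Multiset.sum_replicate, smul_eq_mul,
        μ.parts_sum, hN]
      ring))
  · intro μ hμ
    simp only [Pset, Finset.mem_filter, Finset.mem_univ, true_and] at hμ
    rw [Hset, Finset.mem_filter]
    simp only [Hset, Finset.mem_filter, Finset.mem_univ, true_and, IsHarmonicWithMax,
      mkPart_parts]
    have hcount : ∀ b, (Multiset.replicate a a + (μ.parts + μ.parts)).count b =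
        (if b = a then a else 0) + 2 * μ.parts.count b := by
      intro b
      rw [Multiset.count_add, Multiset.count_add, Multiset.count_replicate]
      split_ifs <;> omega
    constructor
    · rw [← Multiset.count_pos, hcount a, if_pos rfl]
      omega
    refine ⟨?_, ?_, ?_, ?_⟩
    · intro b hb
      rcases Multiset.mem_add.1 hb with h | h
      · rw [Multiset.eq_of_mem_replicate h]
      · rcases Multiset.mem_add.1 h with h' | h' <;> exact hμ b h'
    · rw [hcount a, if_pos rfl]
      omega
    · rw [hcount a, if_pos rfl]
      exact ⟨μ.parts.count a, by omega⟩
    · intro b _ hne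
      rw [hcount b, if_neg hne]
      exact ⟨μ.parts.count b, by omega⟩
  · intro μ hμ ν hν h
    have hc := congrArg Nat.Partition.parts h
    simp only [mkPart_parts] at hc
    apply Nat.Partition.ext
    ext b
    have := congrArg (Multiset.count b) hc
    rw [Multiset.count_add, Multiset.count_add, Multiset.count_add, Multiset.count_add] at this
    omega
  · intro p hp
    simp only [Hset, Finset.mem_filter, Finset.mem_univ, true_and] at hp
    obtain ⟨hmem, hbound, hcnt, heven, hev⟩ := hp
    set t := p.parts - Multiset.replicate a a with ht
    have hle : Multiset.replicate a a ≤ p.parts := Multiset.le_count_iff_replicate_le.1 hcnt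
    have hcountt : ∀ b, t.count b = p.parts.count b - (if b = a then a else 0) := by
      intro b
      rw [ht, Multiset.count_sub, Multiset.count_replicate]
      split_ifs <;> omega
    have hteven : ∀ b, t.count b % 2 = 0 := by
      intro b
      rw [hcountt b]
      rcases eq_or_ne b a with rfl | hne
      · rw [if_pos rfl]
        rcases heven with ⟨r, hr⟩
        omega
      · rw [if_neg hne]
        by_cases hbm : b ∈ p.parts
        · rcases hev b hbm hne with ⟨r, hr⟩
          omega
        · rw [Multiset.count_eq_zero_of_notMem hbm]
    have hhalf : ∀ b, 2 * ((half t).count b) = t.count b := by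
      intro b
      rw [count_half]
      have := hteven b
      omega
    have hkey : Multiset.replicate a a + (half t + half t) = p.parts := by
      ext b
      rw [Multiset.count_add, Multiset.count_add, Multiset.count_replicate]
      have h1 := hhalf b
      have h2 := hcountt b
      split_ifs at h2 ⊢ <;> (try subst_vars) <;> omega
    have hmemhalf : ∀ b ∈ half t, b ∈ p.parts := by
      intro b hb
      have : 0 < (half t).count b := Multiset.count_pos.2 hb
      have h1 := hhalf b
      have h2 := hcountt b
      rw [← Multiset.count_pos]
      split_ifs at h2 <;> (try subst_vars) <;> omega
    have hsumhalf : (half t).sum = m := by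
      have := congrArg Multiset.sum hkey
      rw [Multiset.sum_add, Multiset.sum_add, Multiset.sum_replicate, smul_eq_mul,
        p.parts_sum, hN] at this
      omega
    refine ⟨mkPart m (half t) (fun i hi => p.parts_pos (hmemhalf i hi)) hsumhalf, ?_, ?_⟩
    · simp only [Pset, Finset.mem_filter, Finset.mem_univ, true_and, mkPart_parts]
      exact fun b hb => hbound b (hmemhalf b hb)
    · apply Nat.Partition.ext
      simp only [mkPart_parts]
      exact hkey

lemma Hset_empty (a N : ℕ) (h : ¬ ∃ m, N = a*a + 2*m) : Hset a N = ∅ := by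
  apply Finset.eq_empty_of_forall_notMem
  intro p hp
  simp only [Hset, Finset.mem_filter, Finset.mem_univ, true_and] at hp
  obtain ⟨hmem, hbound, hcnt, heven, hev⟩ := hp
  apply h
  have hcmod : p.parts.count a % 2 = a % 2 := by
    rcases heven with ⟨r, hr⟩
    omega
  have hevmod : ∀ b ∈ p.parts, b ≠ a → p.parts.count b % 2 = 0 := by
    intro b hb hne
    rcases hev b hb hne with ⟨r, hr⟩
    omega
  have h1 : N % 2 = (Multiset.card p.parts) % 2 := by
    have := harmonic_mod p.parts a hcmod hevmod
    rwa [p.parts_sum] at this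
  have h2 : (Multiset.card p.parts) % 2 = a % 2 :=
    harmonic_card_mod p.parts a hmem hcmod hevmod
  have h3 : a * a ≤ N := by
    have hrep : (Multiset.replicate (p.parts.count a) a).sum ≤ p.parts.sum := by
      have hle : Multiset.replicate (p.parts.count a) a ≤ p.parts :=
        Multiset.le_count_iff_replicate_le.1 (le_refl _)
      have := congrArg Multiset.sum (tsub_add_cancel_of_le hle)
      rw [Multiset.sum_add] at this
      omega
    rw [Multiset.sum_replicate, smul_eq_mul, p.parts_sum] at hrep
    calc a * a ≤ p.parts.count a * a := Nat.mul_le_mul_right a hcnt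
      _ ≤ N := hrep
  refine ⟨(N - a*a)/2, ?_⟩
  have hpar : N % 2 = (a*a) % 2 := by
    rw [h1, h2, Nat.mul_mod]
    rcases Nat.mod_two_eq_zero_or_one a with hh | hh <;> rw [hh]
  omega

lemma Dset_empty (a N : ℕ) (h : ¬ ∃ m, N = a*a + 2*m) : Dset a N = ∅ := by
  apply Finset.eq_empty_of_forall_notMem
  intro p hp
  have h1 := Dsum_lower hp
  have h2 := Dset_parity hp
  have h3 : a*a ≤ N := by nlinarith
  have h4 : a % 2 = (a*a) % 2 := by
    rw [Nat.mul_mod]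
    rcases Nat.mod_two_eq_zero_or_one a with hh | hh <;> rw [hh]
  exact h ⟨(N - a*a)/2, by omega⟩

lemma DO_decomp (n : ℕ) :
    (Finset.univ.filter fun p : n.Partition =>
        p.parts.Nodup ∧ ∀ b ∈ p.parts, Odd b).card =
      ∑ a ∈ Finset.range (n+1), (Dset a n).card := by
  rw [Finset.card_eq_sum_card_fiberwise
    (f := fun p : n.Partition => Multiset.card p.parts) (t := Finset.range (n+1)) ?_]
  · apply Finset.sum_congr rfl
    intro a _
    congr 1
    ext p
    simp only [Dset, Finset.mem_filter, Finset.mem_univ, true_and]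
    tauto
  · intro p _
    rw [Finset.mem_coe, Finset.mem_range]
    show Multiset.card p.parts < n + 1
    have := card_le_sum_of_pos p.parts (fun x hx => p.parts_pos hx)
    rw [p.parts_sum] at this
    omega

lemma H_decomp (n : ℕ) :
    (Finset.univ.filter fun p : n.Partition => IsHarmonic p).card =
      ∑ a ∈ Finset.range (n+1), (Hset a n).card := by
  rw [Finset.card_eq_sum_card_fiberwise
    (f := fun p : n.Partition => p.parts.sup) (t := Finset.range (n+1)) ?_]
  · apply Finset.sum_congr rfl
    intro a _
    congr 1
    ext p
    simp only [Hset, Finset.mem_filter, Finset.mem_univ, true_and]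
    constructor
    · rintro ⟨⟨a', hmem, hbound, h1, h2, h3⟩, hsup⟩
      have hsupa : p.parts.sup = a' :=
        le_antisymm (Multiset.sup_le.2 hbound) (Multiset.le_sup hmem)
      rw [hsup] at hsupa
      exact hsupa ▸ ⟨hmem, hbound, h1, h2, h3⟩
    · rintro h
      obtain ⟨hmem, hbound, h1, h2, h3⟩ := id h
      refine ⟨⟨a, h⟩, le_antisymm (Multiset.sup_le.2 hbound) (Multiset.le_sup hmem)⟩
  · intro p hp
    rw [Finset.mem_coe, Finset.mem_range]
    simp only [Finset.mem_coe, Finset.mem_filter] at hp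
    obtain ⟨-, a, hmem, hbound, -⟩ := hp
    have hsupa : p.parts.sup = a :=
      le_antisymm (Multiset.sup_le.2 hbound) (Multiset.le_sup hmem)
    show p.parts.sup < n + 1
    rw [hsupa]
    have : a ≤ p.parts.sum := Multiset.le_sum_of_mem hmem
    rw [p.parts_sum] at this
    omega

lemma card_DO_eq_card_harmonic (n : ℕ) (hn : 0 < n) :
    (Finset.univ.filter fun p : n.Partition =>
        p.parts.Nodup ∧ ∀ b ∈ p.parts, Odd b).card =
      (Finset.univ.filter fun p : n.Partition => IsHarmonic p).card := by
  rw [DO_decomp, H_decomp]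
  apply Finset.sum_congr rfl
  intro a _
  by_cases hex : ∃ m, n = a*a + 2*m
  · obtain ⟨m, hm⟩ := hex
    rcases Nat.eq_zero_or_pos a with rfl | ha
    · rw [Dset_zero, if_neg (by omega)]
      symm
      rw [Finset.card_eq_zero]
      apply Finset.eq_empty_of_forall_notMem
      intro p hp
      rw [Hset, Finset.mem_filter] at hp
      simp only [Hset, Finset.mem_filter, IsHarmonicWithMax] at hp
      exact (p.parts_pos hp.2.1).ne rfl
    · rw [D_eq_P n a m hm, Hset_card a m n ha hm]
  · rw [Dset_empty a n hex, Hset_empty a n hex]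

lemma harmonic_parity {n : ℕ} (p : n.Partition) (h : IsHarmonic p) :
    (Even (Multiset.card p.parts) ↔ Even n) := by
  obtain ⟨a, hmem, hbound, hcnt, heven, hev⟩ := h
  have hcmod : p.parts.count a % 2 = a % 2 := by
    rcases heven with ⟨r, hr⟩
    omega
  have hevmod : ∀ b ∈ p.parts, b ≠ a → p.parts.count b % 2 = 0 := by
    intro b hb hne
    rcases hev b hb hne with ⟨r, hr⟩
    omega
  have h1 := harmonic_mod p.parts a hcmod hevmod
  rw [p.parts_sum] at h1
  rw [Nat.even_iff, Nat.even_iff]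
  omega

end HarmonicAux

open HarmonicAux in
/-- The signed count of partitions of `n` (even length minus odd length) equals the sum
of `(-1)^{length σ}` over harmonic partitions `σ` of `n`, and all harmonic partitions of
`n` have length of the same parity (so this sum is `(-1)^{n₁}` times the number of
harmonic partitions). -/
theorem signed_partitions_eq_harmonic_sum (n : ℕ) (hn : 0 < n) :
    (((Finset.univ.filter fun p : n.Partition => Even (Multiset.card p.parts)).card : ℤ) -
      ((Finset.univ.filter fun p : n.Partition => ¬ Even (Multiset.card p.parts)).card : ℤ) =
      ∑ p ∈ Finset.univ.filter fun p : n.Partition => IsHarmonic p,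
        (-1 : ℤ) ^ (Multiset.card p.parts)) ∧
    (∀ p q : n.Partition, IsHarmonic p → IsHarmonic q →
      (Even (Multiset.card p.parts) ↔ Even (Multiset.card q.parts))) := by
  have hex : ∀ p : n.Partition, ¬ (p.parts.Nodup ∧ ∀ b ∈ p.parts, Odd b) →
      ∃ b, bad p.parts b := by
    intro p hp
    by_contra hc
    push_neg at hc
    exact hp ((DO_iff_no_bad p).2 (fun b => hc b))
  constructor
  · have h1 : ((Finset.univ.filter fun p : n.Partition => Even (Multiset.card p.parts)).card : ℤ) -
        ((Finset.univ.filter fun p : n.Partition => ¬ Even (Multiset.card p.parts)).card : ℤ) =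
        ∑ p : n.Partition, (-1 : ℤ) ^ (Multiset.card p.parts) := by
      rw [← Finset.sum_filter_add_sum_filter_not Finset.univ
        (fun p : n.Partition => Even (Multiset.card p.parts))
        (fun p => (-1 : ℤ) ^ (Multiset.card p.parts))]
      have hA : ∑ p ∈ Finset.univ.filter
          (fun p : n.Partition => Even (Multiset.card p.parts)),
          (-1 : ℤ) ^ (Multiset.card p.parts) =
          ((Finset.univ.filter fun p : n.Partition => Even (Multiset.card p.parts)).card : ℤ) := by
        rw [Finset.sum_congr rfl (g := fun _ => (1 : ℤ)) (fun p hp => ?_), Finset.sum_const,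
          nsmul_eq_mul, mul_one]
        simp only [Finset.mem_filter] at hp
        exact hp.2.neg_one_pow
      have hB : ∑ p ∈ Finset.univ.filter
          (fun p : n.Partition => ¬ Even (Multiset.card p.parts)),
          (-1 : ℤ) ^ (Multiset.card p.parts) =
          -((Finset.univ.filter fun p : n.Partition =>
              ¬ Even (Multiset.card p.parts)).card : ℤ) := by
        rw [Finset.sum_congr rfl (g := fun _ => (-1 : ℤ)) (fun p hp => ?_), Finset.sum_const]
        · rw [nsmul_eq_mul]; ring
        · simp only [Finset.mem_filter] at hp
          exact (Nat.not_even_iff_odd.1 hp.2).neg_one_pow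
      rw [hA, hB]
      ring
    have h2 : ∑ p : n.Partition, (-1 : ℤ) ^ (Multiset.card p.parts) =
        ∑ p ∈ Finset.univ.filter (fun p : n.Partition =>
          p.parts.Nodup ∧ ∀ b ∈ p.parts, Odd b), (-1 : ℤ) ^ (Multiset.card p.parts) := by
      rw [← Finset.sum_filter_add_sum_filter_not Finset.univ
        (fun p : n.Partition => p.parts.Nodup ∧ ∀ b ∈ p.parts, Odd b)
        (fun p => (-1 : ℤ) ^ (Multiset.card p.parts))]
      have hzero : ∑ p ∈ Finset.univ.filter (fun p : n.Partition =>
          ¬ (p.parts.Nodup ∧ ∀ b ∈ p.parts, Odd b)),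
          (-1 : ℤ) ^ (Multiset.card p.parts) = 0 := by
        apply Finset.sum_involution (g := fun p _ => iota p)
        · intro p hp
          simp only [Finset.mem_filter] at hp
          have H := hex p hp.2
          rcases iota_card p H with h | h
          · rw [h, pow_succ]; ring
          · rw [← h, pow_succ]; ring
        · intro p hp _
          simp only [Finset.mem_filter] at hp
          exact iota_ne p (hex p hp.2)
        · intro p hp
          simp only [Finset.mem_filter] at hp ⊢
          have H := hex p hp.2
          refine ⟨Finset.mem_univ _, fun hDO => ?_⟩
          have := (DO_iff_no_bad (iota p)).1 hDO
          rcases iota_not_DO p H with ⟨b, hb⟩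
          exact this b hb
        · intro p hp
          simp only [Finset.mem_filter] at hp
          exact iota_iota p (hex p hp.2)
      rw [hzero, add_zero]
    have h3 : ∑ p ∈ Finset.univ.filter (fun p : n.Partition =>
        p.parts.Nodup ∧ ∀ b ∈ p.parts, Odd b), (-1 : ℤ) ^ (Multiset.card p.parts) =
        ((-1 : ℤ) ^ n) * ((Finset.univ.filter (fun p : n.Partition =>
          p.parts.Nodup ∧ ∀ b ∈ p.parts, Odd b)).card : ℤ) := by
      rw [Finset.sum_congr rfl (g := fun _ => ((-1 : ℤ) ^ n)) (fun p hp => ?_),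
        Finset.sum_const]
      · rw [nsmul_eq_mul]; ring
      · simp only [Finset.mem_filter] at hp
        refine sign_eq ?_
        conv_rhs => rw [← p.parts_sum]
        exact (odd_sum_parity p.parts hp.2.2).symm
    have h4 : ∑ p ∈ Finset.univ.filter (fun p : n.Partition => IsHarmonic p),
        (-1 : ℤ) ^ (Multiset.card p.parts) =
        ((-1 : ℤ) ^ n) * ((Finset.univ.filter (fun p : n.Partition =>
          IsHarmonic p)).card : ℤ) := by
      rw [Finset.sum_congr rfl (g := fun _ => ((-1 : ℤ) ^ n)) (fun p hp => ?_),
        Finset.sum_const]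
      · rw [nsmul_eq_mul]; ring
      · simp only [Finset.mem_filter] at hp
        exact sign_eq (harmonic_parity p hp.2)
    rw [h1, h2, h3, h4, card_DO_eq_card_harmonic n hn]
  · intro p q hp hq
    rw [HarmonicAux.harmonic_parity p hp, HarmonicAux.harmonic_parity q hq]
end

section
/- For every positive integer n, the number of partitions of n of the form ((n_1)^{n_1+2s}, (n_2)^{2t_2}, ..., (n_k)^{2t_k}) with n_1 > n_2 > ... > n_k > 0, s ≥ 0, t_i ≥ 1, and with total number of parts ℓ ≡ l (mod 2), summed with sign (-1)^ℓ over all such partitions, equals the coefficient of q^n in ∑_{l=1}^{∞} (-1)^l q^{l^2}/∏_{j=1}^{l}(1-q^{2j}). -/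
/-!
Sort the harmonic partitions of `n` by their largest part `L`. All other multiplicities are even
and that of `L` has the parity of `L`, so each such partition has sign `(-1)^L`. Removing `L`
copies of `L` is a bijection onto the partitions of `n - L²` into parts `≤ L` with even
multiplicities, whose generating function is `∏_{j ≤ L} (1 - q^{2j})⁻¹` by Euler's product for
partitions with prescribed multiplicities (`Nat.Partition.hasProd_genFun`).
-/

open Finset

namespace PowerSeries.WithPiTopology

theorem hasSum_ite_even_pow {R : Type*} [CommSemiring R] [TopologicalSpace R] {f : R⟦X⟧}
    (hf : constantCoeff f = 0) :
    HasSum (fun c ↦ if Even c then f ^ c else 0) (∑' k, (f ^ 2) ^ k) := by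
  have hsq : constantCoeff (f ^ 2) = 0 := by simp [hf]
  refine ((mul_right_injective₀ two_ne_zero).hasSum_iff fun c hc ↦ if_neg ?_).mp ?_
  · rintro ⟨k, rfl⟩
    exact hc ⟨k, two_mul k⟩
  · simpa [Function.comp_def, ← pow_mul] using
      (summable_pow_of_constantCoeff_eq_zero hsq).hasSum

theorem one_add_tsum_ite_even_pow {R : Type*} [CommRing R] [TopologicalSpace R] [T2Space R]
    [IsTopologicalRing R] {f : R⟦X⟧} (hf : constantCoeff f = 0) :
    1 + ∑' j, (if Even (j + 1) then f ^ (j + 1) else 0) = ∑' k, (f ^ 2) ^ k := by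
  have h : HasSum (fun j ↦ if Even (j + 1) then f ^ (j + 1) else 0)
      (∑' k, (f ^ 2) ^ k - 1) := by
    simpa using (hasSum_nat_add_iff' (f := fun c ↦ if Even c then f ^ c else 0) 1).mpr
      (hasSum_ite_even_pow hf)
  rw [h.tsum_eq]
  abel

end PowerSeries.WithPiTopology

open scoped Classical
open PowerSeries

theorem IsHarmonicWithMax.replicate_le {n a : ℕ} {p : n.Partition} (h : IsHarmonicWithMax a p) :
    Multiset.replicate a a ≤ p.parts :=
  Multiset.le_count_iff_replicate_le.mp h.2.2.1

theorem IsHarmonicWithMax.sum_sub_replicate {n a : ℕ} {p : n.Partition}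
    (h : IsHarmonicWithMax a p) : (p.parts - Multiset.replicate a a).sum + a * a = n := by
  have := congrArg Multiset.sum (tsub_add_cancel_of_le h.replicate_le)
  simpa only [Multiset.sum_add, Multiset.sum_replicate, smul_eq_mul, p.parts_sum] using this

theorem IsHarmonicWithMax.mul_self_le {n a : ℕ} {p : n.Partition} (h : IsHarmonicWithMax a p) :
    a * a ≤ n := by
  have := h.sum_sub_replicate
  omega

theorem IsHarmonicWithMax.le {n a : ℕ} {p : n.Partition} (h : IsHarmonicWithMax a p) : a ≤ n :=
  (Nat.le_mul_self a).trans h.mul_self_le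

theorem IsHarmonicWithMax.unique {n a b : ℕ} {p : n.Partition} (ha : IsHarmonicWithMax a p)
    (hb : IsHarmonicWithMax b p) : a = b :=
  le_antisymm (hb.2.1 a ha.1) (ha.2.1 b hb.1)

theorem IsHarmonicWithMax.neg_one_pow_card {R : Type*} [Monoid R] [HasDistribNeg R] {n a : ℕ}
    {p : n.Partition} (h : IsHarmonicWithMax a p) :
    (-1 : R) ^ Multiset.card p.parts = (-1) ^ a := by
  obtain ⟨ha, -, hle, heven, hrest⟩ := h
  have hothers : Even (∑ i ∈ p.parts.toFinset.erase a, p.parts.count i) :=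
    even_sum _ fun i hi ↦
      hrest i (Multiset.mem_toFinset.mp (mem_of_mem_erase hi)) (ne_of_mem_erase hi)
  have hcard := Multiset.toFinset_sum_count_eq p.parts
  rw [← add_sum_erase _ _ (Multiset.mem_toFinset.mpr ha)] at hcard
  rw [← hcard, ← Nat.add_sub_cancel' hle, add_assoc, pow_add,
    Even.neg_one_pow (heven.add hothers), mul_one]

namespace Nat.Partition

open scoped PowerSeries.WithPiTopology

def evenCountsLE (n L : ℕ) : Finset n.Partition :=
  {p | ∀ i ∈ p.parts, i ≤ L ∧ Even (p.parts.count i)}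

theorem mk_card_evenCountsLE_mul_prod (R : Type*) [CommRing R] (L : ℕ) :
    PowerSeries.mk (fun n ↦ (#(evenCountsLE n L) : R)) *
      ∏ i ∈ range L, (1 - X ^ (2 * (i + 1))) = 1 := by
  -- `hasProd_genFun` needs a topology on `R`; the discrete one is always available.
  let _ : TopologicalSpace R := ⊥
  have _ : DiscreteTopology R := ⟨rfl⟩
  set χ : ℕ → ℕ → R := fun i c ↦ if i ≤ L ∧ Even c then 1 else 0 with hχ
  have hgen : PowerSeries.mk (fun n ↦ (#(evenCountsLE n L) : R)) = genFun χ := by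
    ext n
    simp only [coeff_mk, coeff_genFun, evenCountsLE, Finsupp.prod, hχ, prod_boole, card_filter]
    push_cast
    exact sum_congr rfl fun p _ ↦ by simp
  have hfactor : ∀ i, 1 + ∑' j, χ (i + 1) (j + 1) • (X : R⟦X⟧) ^ ((i + 1) * (j + 1)) =
      if i ∈ range L then ∑' k, (X ^ (2 * (i + 1))) ^ k else 1 := by
    intro i
    split_ifs with hi
    · have hX : constantCoeff ((X : R⟦X⟧) ^ (i + 1)) = 0 := by simp
      simpa [hχ, Nat.succ_le_of_lt (mem_range.mp hi), ite_smul, pow_mul, mul_comm 2]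
        using WithPiTopology.one_add_tsum_ite_even_pow hX
    · simp [hχ, mem_range.not.mp hi]
  have hprod := (hasProd_genFun χ).unique (hasProd_prod_of_ne_finset_one (s := range L)
    fun i hi ↦ by rw [hfactor, if_neg hi])
  rw [hgen, hprod, ← prod_mul_distrib]
  refine prod_eq_one fun i hi ↦ ?_
  rw [hfactor, if_pos hi]
  exact WithPiTopology.tsum_pow_mul_one_sub_of_constantCoeff_eq_zero (by simp)

theorem mk_card_evenCountsLE (K : Type*) [Field K] (L : ℕ) :
    PowerSeries.mk (fun n ↦ (#(evenCountsLE n L) : K)) =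
      (∏ i ∈ range L, (1 - X ^ (2 * (i + 1))))⁻¹ := by
  rw [PowerSeries.eq_inv_iff_mul_eq_one (by simp [map_prod])]
  exact mk_card_evenCountsLE_mul_prod K L

def addReplicate {n i : ℕ} (p : n.Partition) (hi : 0 < i) (k : ℕ) : (n + k * i).Partition where
  parts := p.parts + Multiset.replicate k i
  parts_pos hj := by
    rcases Multiset.mem_add.mp hj with hj | hj
    · exact p.parts_pos hj
    · rwa [Multiset.eq_of_mem_replicate hj]
  parts_sum := by simp [p.parts_sum]

theorem isHarmonicWithMax_addReplicate {m L : ℕ} (hL : 0 < L) {q : m.Partition}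
    (hq : q ∈ evenCountsLE m L) : IsHarmonicWithMax L (q.addReplicate hL L) := by
  simp only [evenCountsLE, mem_filter, mem_univ, true_and] at hq
  have hcount : ∀ b,
      (q.addReplicate hL L).parts.count b = q.parts.count b + if b = L then L else 0 := by
    intro b
    simp [addReplicate, Multiset.count_replicate, eq_comm]
  refine ⟨?_, fun b hb ↦ ?_, ?_, ?_, fun b hb hbL ↦ ?_⟩
  · simp [addReplicate, Multiset.mem_replicate, hL.ne']
  · rcases Multiset.mem_add.mp hb with hb | hb
    · exact (hq b hb).1
    · exact (Multiset.eq_of_mem_replicate hb).le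
  · simp [hcount]
  · by_cases hLq : L ∈ q.parts
    · simpa [hcount] using (hq L hLq).2
    · simp [hcount, Multiset.count_eq_zero_of_notMem hLq]
  · have hbq : b ∈ q.parts := by simpa [addReplicate, Multiset.mem_replicate, hbL] using hb
    simpa [hcount, hbL] using (hq b hbq).2

theorem card_isHarmonicWithMax_add_mul_self (m : ℕ) {L : ℕ} (hL : 0 < L) :
    #{p : (m + L * L).Partition | IsHarmonicWithMax L p} = #(evenCountsLE m L) := by
  symm
  refine card_bij (fun q _ ↦ q.addReplicate hL L)
    (fun q hq ↦ mem_filter.mpr ⟨mem_univ _, isHarmonicWithMax_addReplicate hL hq⟩)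
    (fun q₁ _ q₂ _ h ↦ Nat.Partition.ext (add_right_cancel (congrArg parts h))) ?_
  intro p hp
  have hLp : IsHarmonicWithMax L p := (mem_filter.mp hp).2
  have hsub : p.parts - Multiset.replicate L L ≤ p.parts := Multiset.sub_le_self _ _
  let q : m.Partition :=
    { parts := p.parts - Multiset.replicate L L
      parts_pos := fun hi ↦ p.parts_pos (Multiset.mem_of_le hsub hi)
      parts_sum := by have := hLp.sum_sub_replicate; omega }
  refine ⟨q, mem_filter.mpr ⟨mem_univ _, fun i hi ↦ ?_⟩,
    Nat.Partition.ext (tsub_add_cancel_of_le hLp.replicate_le)⟩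
  have hip : i ∈ p.parts := Multiset.mem_of_le hsub hi
  refine ⟨hLp.2.1 i hip, ?_⟩
  simp only [q, Multiset.count_sub, Multiset.count_replicate]
  by_cases hiL : i = L
  · subst hiL
    simpa using hLp.2.2.2.1
  · simpa [Ne.symm hiL] using hLp.2.2.2.2 i hip hiL

end Nat.Partition

theorem mk_card_isHarmonicWithMax (R : Type*) [CommSemiring R] {L : ℕ} (hL : 0 < L) :
    PowerSeries.mk (fun n ↦ (#{p : n.Partition | IsHarmonicWithMax L p} : R)) =
      X ^ (L * L) * PowerSeries.mk (fun n ↦ (#(Nat.Partition.evenCountsLE n L) : R)) := by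
  ext n
  rw [coeff_X_pow_mul', coeff_mk, coeff_mk]
  split_ifs with h
  · obtain ⟨m, rfl⟩ := Nat.exists_eq_add_of_le' h
    rw [Nat.add_sub_cancel, Nat.Partition.card_isHarmonicWithMax_add_mul_self m hL]
  · rw [card_eq_zero.mpr (filter_eq_empty_iff.mpr fun p _ hp ↦ h hp.mul_self_le), Nat.cast_zero]

theorem filter_isHarmonic_eq_biUnion (n : ℕ) :
    ({p : n.Partition | IsHarmonic p} : Finset _) =
      (range (n + 1)).biUnion fun l ↦ {p : n.Partition | IsHarmonicWithMax (l + 1) p} := by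
  ext p
  simp only [mem_filter, mem_biUnion, mem_range, mem_univ, true_and]
  constructor
  · rintro ⟨a, ha⟩
    have hpos : 0 < a := p.parts_pos ha.1
    exact ⟨a - 1, by have := ha.le; omega, by rwa [Nat.sub_add_cancel hpos]⟩
  · rintro ⟨l, -, h⟩
    exact ⟨l + 1, h⟩

theorem pairwiseDisjoint_isHarmonicWithMax (n : ℕ) (s : Finset ℕ) :
    (s : Set ℕ).PairwiseDisjoint
      fun l ↦ ({p : n.Partition | IsHarmonicWithMax (l + 1) p} : Finset _) :=
  fun _ _ _ _ hne ↦ disjoint_left.mpr fun _ h₁ h₂ ↦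
    hne (Nat.succ_injective ((mem_filter.mp h₁).2.unique (mem_filter.mp h₂).2))

theorem harmonic_signed_sum_eq_coeff_general (n : ℕ) :
    (∑ p ∈ Finset.univ.filter fun p : n.Partition => IsHarmonic p,
        (-1 : ℚ) ^ (Multiset.card p.parts)) =
    (PowerSeries.coeff (R := ℚ) n) (∑ l ∈ Finset.range (n + 1),
      ((-1 : PowerSeries ℚ) ^ (l + 1) * (X : PowerSeries ℚ) ^ ((l + 1) ^ 2) *
        (∏ j ∈ Finset.range (l + 1), (1 - (X : PowerSeries ℚ) ^ (2 * (j + 1))))⁻¹)) := by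
  rw [filter_isHarmonic_eq_biUnion, sum_biUnion (pairwiseDisjoint_isHarmonicWithMax n _), map_sum]
  refine sum_congr rfl fun l _ ↦ ?_
  have hsign : (-1 : ℚ⟦X⟧) ^ (l + 1) = C ((-1) ^ (l + 1)) := by simp
  rw [sum_congr rfl fun p hp ↦ (mem_filter.mp hp).2.neg_one_pow_card, sum_const, nsmul_eq_mul,
    ← Nat.Partition.mk_card_evenCountsLE, sq, mul_assoc, ← mk_card_isHarmonicWithMax ℚ l.succ_pos,
    hsign, coeff_C_mul, coeff_mk, mul_comm]

/-- The sum of `(-1)^{length σ}` over harmonic partitions `σ` of `n` equals the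
coefficient of `q^n` in `∑_{l=1}^∞ (-1)^l q^{l²} / ∏_{j=1}^{l} (1 - q^{2j})`
(truncating the sum at `l = n + 1`, which does not affect the coefficient of `q^n`). -/
theorem harmonic_signed_sum_eq_coeff (n : ℕ) (hn : 0 < n) :
    (∑ p ∈ Finset.univ.filter fun p : n.Partition => IsHarmonic p,
        (-1 : ℚ) ^ (Multiset.card p.parts)) =
    (PowerSeries.coeff (R := ℚ) n) (∑ l ∈ Finset.range (n + 1),
      ((-1 : PowerSeries ℚ) ^ (l + 1) * (X : PowerSeries ℚ) ^ ((l + 1) ^ 2) *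
        (∏ j ∈ Finset.range (l + 1), (1 - (X : PowerSeries ℚ) ^ (2 * (j + 1))))⁻¹)) :=
  harmonic_signed_sum_eq_coeff_general n
end

section
/- Define, for a partition σ = (n_1,...,n_ℓ) of n into distinct parts, m(σ) as the maximal index m such that n_j = n_{j-1} - 1 for all 2 ≤ j ≤ m (with m(σ)=1 when ℓ=1 or n_2 < n_1 - 1). Define the linear map δ on partitions with distinct parts by: if m(σ) < ℓ then δ(σ) = 0 when m(σ) ≥ n_ℓ and δ(σ) = (n_1-1,...,n_{m(σ)}-1, n_{m(σ)+1},...,n_ℓ, m(σ)) when m(σ) < n_ℓ; if m(σ) = ℓ then δ(σ) = 0 when m(σ) ≥ n_ℓ - 1 and δ(σ) = (n_1-1,...,n_ℓ-1, m(σ)) when m(σ) < n_ℓ - 1. Then δ maps partitions of n with ℓ distinct parts to partitions of n with ℓ+1 distinct parts (or 0), and δ ∘ δ = 0. -/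
/-! The first `m = m(σ)` parts of `σ` form a run `a, a - 1, …, a - m + 1`, and by maximality
of the run every later part is at most `a - m - 1`. When `δσ ≠ 0` all parts exceed `m` and
`2m < a`, so lowering the run to `a - 1, …, a - m` and appending the part `m` keeps the parts
positive and strictly decreasing, preserves the sum and adds one part. The run of `δσ` still
has length at least `m`, which is its last part, and that is exactly when `δ` vanishes. -/

/-- A partition of `n` with distinct parts: a strictly decreasing list of positive
integers summing to `n`. -/
def IsDistinctPartition (n : ℕ) (σ : List ℕ) : Prop :=
  σ.Pairwise (· > ·) ∧ (∀ x ∈ σ, 0 < x) ∧ σ.sum = n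

/-- `mval σ` is `m(σ)`: the maximal `m` such that `n_j = n_{j-1} - 1` for all
`2 ≤ j ≤ m`. -/
def mval : List ℕ → ℕ
  | [] => 0
  | [_] => 1
  | a :: b :: t => if b = a - 1 then mval (b :: t) + 1 else 1

/-- The coboundary map `δ`: if `m(σ) < ℓ` then `δσ = 0` when `m(σ) ≥ n_ℓ`, and
`δσ = (n_1-1, …, n_{m(σ)}-1, n_{m(σ)+1}, …, n_ℓ, m(σ))` when `m(σ) < n_ℓ`;
if `m(σ) = ℓ` then `δσ = 0` when `m(σ) ≥ n_ℓ - 1` and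
`δσ = (n_1-1, …, n_ℓ-1, m(σ))` when `m(σ) < n_ℓ - 1`.  The zero vector is
represented by `none`. -/
def deltaS (σ : List ℕ) : Option (List ℕ) :=
  if σ = [] then none
  else
    let m := mval σ
    if (m < σ.length ∧ m < σ.getLast! ) ∨ (m = σ.length ∧ m < σ.getLast! - 1) then
      some ((σ.take m).map (· - 1) ++ σ.drop m ++ [m])
    else none

/-- The adjoint map `δ*`: when (`m(σ) < ℓ` and `m(σ) ≥ n_ℓ`) or (`m(σ) = ℓ` and
`m(σ) > n_ℓ`), `δ*σ = (n_1+1, …, n_{n_ℓ}+1, n_{n_ℓ+1}, …, n_{ℓ-1})` (add 1 to the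
first `n_ℓ` parts and delete the last part); otherwise `δ*σ = 0` (`none`). -/
def deltaStarS (σ : List ℕ) : Option (List ℕ) :=
  if σ = [] then none
  else
    let m := mval σ
    let nl := σ.getLast!
    if (m < σ.length ∧ nl ≤ m) ∨ (m = σ.length ∧ nl < m) then
      some ((σ.dropLast.take nl).map (· + 1) ++ σ.dropLast.drop nl)
    else none

def descRun : ℕ → ℕ → List ℕ
  | _, 0 => []
  | a, k + 1 => a :: descRun (a - 1) k

lemma mem_descRun {x a k : ℕ} : x ∈ descRun a k ↔ ∃ i < k, x = a - i := by
  induction k generalizing a with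
  | zero => simp [descRun]
  | succ k ih =>
    simp only [descRun, List.mem_cons, ih]
    constructor
    · rintro (rfl | ⟨i, hi, rfl⟩)
      exacts [⟨0, by omega, rfl⟩, ⟨i + 1, by omega, by omega⟩]
    · rintro ⟨_ | i, hi, rfl⟩
      exacts [Or.inl rfl, Or.inr ⟨i, by omega, by omega⟩]

lemma map_sub_one_descRun (a k : ℕ) : (descRun a k).map (· - 1) = descRun (a - 1) k := by
  induction k generalizing a with
  | zero => rfl
  | succ k ih => simp only [descRun, List.map_cons, ih]

lemma pairwise_gt_descRun {a k : ℕ} (h : k ≤ a + 1) : (descRun a k).Pairwise (· > ·) := by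
  induction k generalizing a with
  | zero => exact List.Pairwise.nil
  | succ k ih =>
    refine List.pairwise_cons.mpr ⟨fun y hy => ?_, ih (by omega)⟩
    obtain ⟨i, hi, rfl⟩ := mem_descRun.mp hy
    omega

lemma mval_pos : ∀ {σ : List ℕ}, σ ≠ [] → 1 ≤ mval σ
  | [_], _ => le_rfl
  | a :: b :: t, _ => by
    simp only [mval]
    split_ifs <;> omega

lemma mval_le_length : ∀ σ : List ℕ, mval σ ≤ σ.length
  | [] => le_rfl
  | [_] => le_rfl
  | a :: b :: t => by
    have := mval_le_length (b :: t)
    simp only [mval, List.length_cons] at this ⊢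
    split_ifs <;> omega

lemma take_mval : ∀ σ : List ℕ, σ.take (mval σ) = descRun σ.head! (mval σ)
  | [] => rfl
  | [_] => rfl
  | a :: b :: t => by
    simp only [mval]
    split_ifs with hb
    · rw [List.take_succ_cons, take_mval (b :: t), hb]
      rfl
    · rfl

lemma lt_head!_sub_mval_of_mem_drop :
    ∀ {σ : List ℕ}, σ.Pairwise (· > ·) →
      ∀ y ∈ σ.drop (mval σ), y < σ.head! - mval σ
  | [], _, _, hy => by simp at hy
  | [_], _, _, hy => by simp [mval] at hy
  | a :: b :: t, hσ, y, hy => by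
    simp only [mval] at hy ⊢
    split_ifs at hy ⊢ with hb
    · rw [List.drop_succ_cons] at hy
      have := lt_head!_sub_mval_of_mem_drop (List.pairwise_cons.mp hσ).2 y hy
      simp only [List.head!_cons] at this ⊢
      omega
    · have hab : b < a := (List.pairwise_cons.mp hσ).1 b (by simp)
      have hyb : y ≤ b := by
        rcases List.mem_cons.mp hy with rfl | hyt
        · exact le_rfl
        · exact ((List.pairwise_cons.mp (List.pairwise_cons.mp hσ).2).1 y hyt).le
      simp only [List.head!_cons]
      omega

lemma le_mval_descRun_append (a : ℕ) (L : List ℕ) : ∀ k, k ≤ mval (descRun a k ++ L)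
  | 0 => Nat.zero_le _
  | 1 => mval_pos (by simp [descRun])
  | k + 2 => by
    have := le_mval_descRun_append (a - 1) L (k + 1)
    simp only [descRun, List.cons_append] at this ⊢
    simp only [mval, ↓reduceIte]
    omega

lemma getLast!_le_of_mem {l : List ℕ} (hl : l.Pairwise (· > ·)) {y : ℕ} (hy : y ∈ l) :
    l.getLast! ≤ y := by
  have hne : l ≠ [] := List.ne_nil_of_mem hy
  have hsplit := List.dropLast_append_getLast hne
  rw [List.getLast!_of_getLast? (List.getLast?_eq_some_getLast hne)]
  rw [← hsplit] at hl hy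
  rcases List.mem_append.mp hy with hy | hy
  · exact ((List.pairwise_append.mp hl).2.2 y hy _ (List.mem_singleton_self _)).le
  · exact (List.mem_singleton.mp hy).ge

lemma sum_map_sub_one_add_length {l : List ℕ} (h : ∀ x ∈ l, 0 < x) :
    (l.map (· - 1)).sum + l.length = l.sum := by
  induction l with
  | nil => rfl
  | cons a t ih =>
    have ha := h a List.mem_cons_self
    have ht := ih fun x hx => h x (List.mem_cons_of_mem a hx)
    simp only [List.map_cons, List.sum_cons, List.length_cons]
    omega

lemma pairwise_gt_descRun_append_append {a m : ℕ} {D : List ℕ} (hD : D.Pairwise (· > ·))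
    (hDm : ∀ y ∈ D, m < y ∧ y < a - m) (hm : m < a - m) :
    (descRun (a - 1) m ++ D ++ [m]).Pairwise (· > ·) := by
  have hrun : ∀ x ∈ descRun (a - 1) m, a - m ≤ x := fun x hx => by
    obtain ⟨i, hi, rfl⟩ := mem_descRun.mp hx
    omega
  refine List.pairwise_append.mpr ⟨List.pairwise_append.mpr ⟨pairwise_gt_descRun (by omega), hD,
    fun x hx y hy => ?_⟩, List.pairwise_singleton _ _, fun x hx y hy => ?_⟩
  · linarith [hrun x hx, (hDm y hy).2]
  · rw [List.mem_singleton.mp hy]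
    rcases List.mem_append.mp hx with hx | hx
    · linarith [hrun x hx]
    · exact (hDm x hx).1

lemma deltaS_eq_some_iff {σ τ : List ℕ} :
    deltaS σ = some τ ↔ σ ≠ [] ∧
      ((mval σ < σ.length ∧ mval σ < σ.getLast!) ∨
        (mval σ = σ.length ∧ mval σ < σ.getLast! - 1)) ∧
      τ = (σ.take (mval σ)).map (· - 1) ++ σ.drop (mval σ) ++ [mval σ] := by
  unfold deltaS
  split_ifs <;> simp_all [eq_comm]

lemma deltaS_eq_none_of_getLast!_le_mval {τ : List ℕ} (h : τ.getLast! ≤ mval τ) :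
    deltaS τ = none := by
  simp only [deltaS]
  split_ifs <;> first | rfl | omega

lemma deltaS_eq_none_of_deltaS_eq_some {σ τ : List ℕ} (h : deltaS σ = some τ) :
    deltaS τ = none := by
  obtain ⟨-, -, rfl⟩ := deltaS_eq_some_iff.mp h
  apply deltaS_eq_none_of_getLast!_le_mval
  rw [List.append_assoc, take_mval, map_sub_one_descRun]
  simpa using le_mval_descRun_append _ _ _

lemma length_of_deltaS_eq_some {σ τ : List ℕ} (h : deltaS σ = some τ) :
    τ.length = σ.length + 1 := by
  obtain ⟨-, -, rfl⟩ := deltaS_eq_some_iff.mp h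
  have := mval_le_length σ
  simp only [List.length_append, List.length_map, List.length_take, List.length_drop,
    List.length_singleton]
  omega

lemma mval_lt_of_deltaS_eq_some {σ τ : List ℕ} (hσ : σ.Pairwise (· > ·))
    (h : deltaS σ = some τ) :
    mval σ < σ.head! - mval σ ∧ ∀ y ∈ σ, mval σ < y := by
  obtain ⟨hne, hcond, -⟩ := deltaS_eq_some_iff.mp h
  have hlast : mval σ < σ.getLast! := by omega
  refine ⟨?_, fun y hy => hlast.trans_le (getLast!_le_of_mem hσ hy)⟩
  rcases hcond with ⟨hlt, -⟩ | ⟨-, hlt⟩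
  · obtain ⟨y, hy⟩ := List.exists_mem_of_ne_nil (σ.drop (mval σ)) (by simpa using hlt)
    have := getLast!_le_of_mem hσ (List.mem_of_mem_drop hy)
    have := lt_head!_sub_mval_of_mem_drop hσ y hy
    omega
  · have hmem : σ.head! - (mval σ - 1) ∈ σ := by
      apply List.take_subset (mval σ)
      rw [take_mval, mem_descRun]
      exact ⟨mval σ - 1, by have := mval_pos hne; omega, rfl⟩
    have := getLast!_le_of_mem hσ hmem
    omega

theorem IsDistinctPartition.of_deltaS_eq_some {n : ℕ} {σ τ : List ℕ}
    (hσ : IsDistinctPartition n σ) (h : deltaS σ = some τ) : IsDistinctPartition n τ := by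
  obtain ⟨hsort, hpos, hsum⟩ := hσ
  obtain ⟨hgap, hbelow⟩ := mval_lt_of_deltaS_eq_some hsort h
  obtain ⟨hne, -, rfl⟩ := deltaS_eq_some_iff.mp h
  have hτsort :
      ((σ.take (mval σ)).map (· - 1) ++ σ.drop (mval σ) ++ [mval σ]).Pairwise (· > ·) := by
    rw [take_mval, map_sub_one_descRun]
    exact pairwise_gt_descRun_append_append (hsort.sublist (List.drop_sublist _ _))
      (fun y hy => ⟨hbelow y (List.mem_of_mem_drop hy),
        lt_head!_sub_mval_of_mem_drop hsort y hy⟩) hgap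
  refine ⟨hτsort, fun x hx => ?_, ?_⟩
  · have hlast := getLast!_le_of_mem hτsort hx
    rw [List.getLast!_of_getLast? List.getLast?_concat] at hlast
    exact (mval_pos hne).trans hlast
  · have hpred := sum_map_sub_one_add_length fun x hx =>
      hpos x (List.take_subset (mval σ) σ hx)
    have hsplit : (σ.take (mval σ)).sum + (σ.drop (mval σ)).sum = n := by
      rw [← List.sum_append, List.take_append_drop, hsum]
    have := mval_le_length σ
    simp only [List.sum_append, List.sum_singleton, List.length_take] at hpred ⊢
    omega

/-- `δ` maps a partition of `n` with `ℓ` distinct parts to a partition of `n` with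
`ℓ + 1` distinct parts (or to `0`, i.e. `none`), and `δ ∘ δ = 0`. -/
theorem deltaS_wellDefined_and_sq_zero (n : ℕ) (σ : List ℕ)
    (hσ : IsDistinctPartition n σ) :
    (∀ τ, deltaS σ = some τ →
      IsDistinctPartition n τ ∧ τ.length = σ.length + 1) ∧
    (∀ τ, deltaS σ = some τ → deltaS τ = none) :=
  ⟨fun _ h => ⟨hσ.of_deltaS_eq_some h, length_of_deltaS_eq_some h⟩,
    fun _ h => deltaS_eq_none_of_deltaS_eq_some h⟩
end

section
/- With δ defined as in Euler's pentagonal setting (subtracting 1 from the first m(σ) parts and appending the new part m(σ) under the stated conditions) and δ* defined dually (adding 1 to the first n_ℓ parts and removing the last part n_ℓ, when m(σ) ≥ n_ℓ if m(σ) < ℓ, or when m(σ) > n_ℓ if m(σ) = ℓ; and δ*(σ) = 0 otherwise), the following hold for partitions σ, τ of n with distinct parts: (i) if δ(σ) = τ ≠ 0 then δ*(τ) = σ, and (ii) if δ*(τ) = σ ≠ 0 then δ(σ) = τ. -/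
/-!
`m(σ)` is the length of the longest prefix of `σ` descending in steps of one, and `δ`, `δ*`
shift a prefix by `∓1` before appending, resp. dropping, the last part. Shifting a staircase
prefix keeps it a staircase, so `m(δσ) ≥ m(σ)`, the new last part, which is all `δ*` asks for;
the two shifts cancel since the parts are positive. Conversely, the staircase of `δ*τ` stops
exactly at `n_ℓ` because the parts of `τ` are distinct, and the last part of `δ*τ` exceeds
`n_ℓ` (by two if every part was raised) because all other parts of `τ` do; this is the
condition for `δ`.
-/

theorem le_mval_iff : ∀ (l : List ℕ) (m : ℕ),
    m ≤ mval l ↔ m ≤ l.length ∧ (l.take m).IsChain (fun a b => b = a - 1)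
  | [], m => by simp [mval]
  | [a], m => by rcases m with _ | _ | m <;> simp [mval]
  | a :: b :: t, 0 => by simp
  | a :: b :: t, 1 => by simp only [mval]; split <;> simp
  | a :: b :: t, m + 2 => by
    have ih := le_mval_iff (b :: t) (m + 1)
    simp only [List.length_cons, List.take_succ_cons] at ih ⊢
    simp only [mval, List.isChain_cons_cons]
    split <;> grind

theorem mval_le_length_s11 (l : List ℕ) : mval l ≤ l.length :=
  ((le_mval_iff l _).1 le_rfl).1

theorem le_mval_append_iff {l r : List ℕ} {m : ℕ} (h : m ≤ l.length) :
    m ≤ mval (l ++ r) ↔ m ≤ mval l := by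
  rw [le_mval_iff, le_mval_iff, List.take_append_of_le_length h]
  exact ⟨fun ⟨_, hc⟩ => ⟨h, hc⟩, fun ⟨_, hc⟩ => ⟨by grind, hc⟩⟩

def mapPrefix {α : Type*} (f : α → α) (k : ℕ) (l : List α) : List α :=
  (l.take k).map f ++ l.drop k

section mapPrefix

variable {α : Type*} (f g : α → α) (k : ℕ) (l : List α)

@[simp]
theorem length_mapPrefix : (mapPrefix f k l).length = l.length := by
  simp only [mapPrefix, List.length_append, List.length_map, List.length_take, List.length_drop]
  omega

theorem take_mapPrefix (h : k ≤ l.length) : (mapPrefix f k l).take k = (l.take k).map f :=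
  List.take_left' (by simpa using h)

theorem mapPrefix_of_length_le (h : l.length ≤ k) : mapPrefix f k l = l.map f := by
  simp [mapPrefix, List.take_of_length_le h, List.drop_of_length_le h]

theorem mapPrefix_mapPrefix : mapPrefix g k (mapPrefix f k l) = mapPrefix (g ∘ f) k l := by
  rcases le_total k l.length with h | h
  · have hA : ((l.take k).map f).length = k := by simpa using h
    rw [mapPrefix, mapPrefix, List.take_left' hA, List.drop_left' hA, List.map_map, mapPrefix]
  · rw [mapPrefix_of_length_le _ _ _ h, mapPrefix_of_length_le _ _ _ (by simpa using h),
      mapPrefix_of_length_le _ _ _ h, List.map_map]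

theorem mapPrefix_eq_self (h : ∀ x ∈ l.take k, f x = x) : mapPrefix f k l = l := by
  rw [mapPrefix, List.map_congr_left h, List.map_id', List.take_append_drop]

theorem getElem_mapPrefix {i : ℕ} (h : i < (mapPrefix f k l).length) :
    (mapPrefix f k l)[i] =
      if i < k then f (l[i]'(by simpa using h)) else l[i]'(by simpa using h) := by
  simp only [mapPrefix, List.getElem_append, List.length_map, List.length_take]
  split_ifs <;> grind

theorem getLast?_mapPrefix :
    (mapPrefix f k l).getLast? = if k < l.length then l.getLast? else l.getLast?.map f := by
  split_ifs with h
  · rw [mapPrefix, List.getLast?_append_of_ne_nil _ (by simpa using h), List.getLast?_drop]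
    simp [h]
  · rw [mapPrefix_of_length_le _ _ _ (not_lt.1 h), List.getLast?_map]

end mapPrefix

theorem le_mval_mapPrefix {f : ℕ → ℕ} {k : ℕ} {l : List ℕ}
    (hf : ∀ a ∈ l, ∀ b ∈ l, b = a - 1 → f b = f a - 1) (h : k ≤ mval l) :
    k ≤ mval (mapPrefix f k l) := by
  obtain ⟨hk, hchain⟩ := (le_mval_iff l k).1 h
  refine (le_mval_iff _ k).2 ⟨by simpa using hk, ?_⟩
  rw [take_mapPrefix _ _ _ hk, List.isChain_map]
  exact hchain.imp_of_mem_imp fun a b ha hb =>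
    hf a (List.mem_of_mem_take ha) b (List.mem_of_mem_take hb)

theorem mval_mapPrefix_add_one_le {k : ℕ} {l : List ℕ} (hk : 0 < k) (hl : l.Nodup) :
    mval (mapPrefix (· + 1) k l) ≤ k := by
  by_contra! hlt
  obtain ⟨hlen, hchain⟩ := (le_mval_iff _ (k + 1)).1 hlt
  simp only [length_mapPrefix] at hlen
  have key := hchain.getElem (k - 1) (by simp only [List.length_take, length_mapPrefix]; omega)
  simp only [List.getElem_take, getElem_mapPrefix, Nat.sub_add_cancel hk, lt_irrefl,
    if_false, Nat.sub_lt hk one_pos, if_true, Nat.add_sub_cancel] at key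
  exact absurd ((hl.getElem_inj_iff).1 key) (by omega)

theorem eq_of_deltaS_eq_some {σ τ : List ℕ} (h : deltaS σ = some τ) :
    τ = mapPrefix (· - 1) (mval σ) σ ++ [mval σ] := by
  dsimp only [deltaS] at h
  split_ifs at h
  exact (Option.some.inj h).symm

theorem deltaS_eq_some {σ : List ℕ} (hne : σ ≠ []) (hlt : mval σ < σ.getLast!)
    (hfull : mval σ = σ.length → mval σ + 1 < σ.getLast!) :
    deltaS σ = some (mapPrefix (· - 1) (mval σ) σ ++ [mval σ]) := by
  have := mval_le_length_s11 σ
  rw [deltaS, if_neg hne, if_pos (by omega)]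
  rfl

theorem deltaStarS_concat {l : List ℕ} {k : ℕ} (hk : k ≤ mval (l ++ [k])) (hkl : k ≤ l.length) :
    deltaStarS (l ++ [k]) = some (mapPrefix (· + 1) k l) := by
  have := mval_le_length_s11 (l ++ [k])
  simp only [List.length_append, List.length_singleton] at this
  simp only [deltaStarS, List.append_ne_nil_of_right_ne_nil l (List.cons_ne_nil k []),
    if_false, List.getLast!_eq_getLast?_getD, List.getLast?_concat, Option.getD_some,
    List.dropLast_concat, List.length_append, List.length_singleton]
  rw [if_pos (by omega)]
  rfl

theorem exists_of_deltaStarS_eq_some {σ τ : List ℕ} (h : deltaStarS τ = some σ) :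
    ∃ l k, τ = l ++ [k] ∧ k ≤ mval τ ∧ k ≤ l.length ∧ σ = mapPrefix (· + 1) k l := by
  dsimp only [deltaStarS] at h
  split_ifs at h with hne hcond
  have := mval_le_length_s11 τ
  refine ⟨τ.dropLast, τ.getLast!, ?_, by omega, ?_, (Option.some.inj h).symm⟩
  · rw [List.getLast!_eq_getLast?_getD, List.getLast?_eq_some_getLast hne, Option.getD_some,
      List.dropLast_append_getLast]
  · simp only [List.length_dropLast]
    omega

theorem deltaStarS_of_deltaS_eq_some {σ τ : List ℕ} (hpos : ∀ x ∈ σ, 0 < x)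
    (h : deltaS σ = some τ) : deltaStarS τ = some σ := by
  have hm : mval σ ≤ (mapPrefix (· - 1) (mval σ) σ).length := by
    simpa using mval_le_length_s11 σ
  rw [eq_of_deltaS_eq_some h, deltaStarS_concat ?_ hm, mapPrefix_mapPrefix, mapPrefix_eq_self]
  · intro x hx
    have := hpos x (List.mem_of_mem_take hx)
    simp only [Function.comp_apply]
    omega
  · rw [le_mval_append_iff hm]
    exact le_mval_mapPrefix (fun a _ b _ hab => by omega) le_rfl

theorem deltaS_of_deltaStarS_eq_some {σ τ : List ℕ} (hdec : τ.Pairwise (· > ·))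
    (hpos : ∀ x ∈ τ, 0 < x) (h : deltaStarS τ = some σ) : deltaS σ = some τ := by
  obtain ⟨l, k, rfl, hk, hkl, rfl⟩ := exists_of_deltaStarS_eq_some h
  obtain ⟨hldec, -, hgt⟩ := List.pairwise_append.1 hdec
  have hk0 : 0 < k := hpos k (by simp)
  have hlpos : ∀ x ∈ l, 0 < x := fun x hx => hpos x (by simp [hx])
  have hmval : mval (mapPrefix (· + 1) k l) = k :=
    le_antisymm (mval_mapPrefix_add_one_le hk0 hldec.nodup)
      (le_mval_mapPrefix (fun a _ b hb hab => by have := hlpos b hb; omega)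
        ((le_mval_append_iff hkl).1 hk))
  obtain ⟨a, ha⟩ : ∃ a, l.getLast? = some a :=
    Option.isSome_iff_exists.1 (List.getLast?_isSome.2 (List.ne_nil_of_length_pos (by omega)))
  have hka : k < a := by simpa using hgt a (List.mem_of_getLast? ha)
  rw [deltaS_eq_some, hmval, mapPrefix_mapPrefix, mapPrefix_eq_self]
  · simp
  · exact List.ne_nil_of_length_pos (by simp only [length_mapPrefix]; omega)
  · rw [hmval, List.getLast!_eq_getLast?_getD, getLast?_mapPrefix, ha]
    split_ifs <;> simp only [Option.map_some, Nat.default_eq_zero, Option.getD_some] <;> omega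
  · rw [hmval, length_mapPrefix, List.getLast!_eq_getLast?_getD, getLast?_mapPrefix, ha]
    intro hkl'
    simp only [hkl', lt_self_iff_false, if_false, Option.map_some, Nat.default_eq_zero,
      Option.getD_some]
    omega

/-- Adjointness of `δ` and `δ*` on partitions of `n` with distinct parts:
(i) if `δσ = τ ≠ 0` then `δ*τ = σ`, and (ii) if `δ*τ = σ ≠ 0` then `δσ = τ`. -/
theorem deltaS_deltaStarS_adjoint (n : ℕ) (σ τ : List ℕ)
    (hσ : IsDistinctPartition n σ) (hτ : IsDistinctPartition n τ) :
    (deltaS σ = some τ → deltaStarS τ = some σ) ∧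
    (deltaStarS τ = some σ → deltaS σ = some τ) :=
  ⟨deltaStarS_of_deltaS_eq_some hσ.2.1, deltaS_of_deltaStarS_eq_some hτ.1 hτ.2.1⟩
end

section
/- For each positive integer l and integer n ≥ l^2, the number of partitions of n of the form ((l)^{l+2s}, (n_2)^{2t_2}, ..., (n_k)^{2t_k}) with l > n_2 > ... > n_k > 0, s ≥ 0, t_i ≥ 1, equals the number of partitions of (n - l^2)/2 into parts of size at most l, when n - l^2 is even (and is zero when n - l^2 is odd). -/
/-!
Removing `l` copies of `l` from a harmonic partition with largest part `l` leaves a multiset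
all of whose multiplicities are even, that is, one of the form `q + q`, where `q` is a partition
of `(n - l²)/2` into parts at most `l`. Conversely `(l^l) + q + q` is harmonic, and `q`
is recovered from it because multisets are torsion free.
-/

open Finset

open scoped Classical

theorem Multiset.even_iff_forall_even_count {α : Type*} [DecidableEq α] (s : Multiset α) :
    Even s ↔ ∀ a, Even (s.count a) := by
  refine ⟨fun ⟨r, hr⟩ a => ⟨r.count a, by rw [hr, count_add]⟩, fun h => ?_⟩
  refine ⟨∑ a ∈ s.toFinset, replicate (s.count a / 2) a, ext.mpr fun a => ?_⟩
  have hhalf : s.count a / 2 + s.count a / 2 = s.count a := by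
    obtain ⟨k, hk⟩ := h a; omega
  by_cases ha : a ∈ s
  · simp [count_sum', count_replicate, ha, hhalf]
  · simp [count_sum', count_replicate, ha]

theorem isHarmonicWithMax_iff {n l : ℕ} (hl : 0 < l) (p : n.Partition) :
    IsHarmonicWithMax l p ↔
      ∃ q : Multiset ℕ, (∀ x ∈ q, x ≤ l) ∧ p.parts = Multiset.replicate l l + (q + q) := by
  constructor
  · rintro ⟨-, hmax, hle, heven, hothers⟩
    have hsplit : p.parts = Multiset.replicate l l + (p.parts - Multiset.replicate l l) :=
      (add_tsub_cancel_of_le (Multiset.le_count_iff_replicate_le.mp hle)).symm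
    obtain ⟨q, hq⟩ : Even (p.parts - Multiset.replicate l l) := by
      refine (Multiset.even_iff_forall_even_count _).mpr fun x => ?_
      rw [Multiset.count_sub, Multiset.count_replicate]
      by_cases hx : x = l
      · subst hx; simpa using heven
      · by_cases hxp : x ∈ p.parts
        · simpa [Ne.symm hx] using hothers x hxp hx
        · simp [Multiset.count_eq_zero_of_notMem hxp]
    exact ⟨q, fun x hx => hmax x (by rw [hsplit, hq]; simp [hx]), hq ▸ hsplit⟩
  · rintro ⟨q, hq, hp⟩
    have hcount (x : ℕ) : p.parts.count x = (if x = l then l else 0) + 2 * q.count x := by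
      rw [hp, Multiset.count_add, Multiset.count_add, Multiset.count_replicate]
      split_ifs <;> omega
    refine ⟨?_, ?_, ?_, ?_, ?_⟩
    · rw [← Multiset.count_pos, hcount, if_pos rfl]; omega
    · intro b hb
      rw [hp] at hb
      rcases Multiset.mem_add.mp hb with hb | hb
      · exact (Multiset.eq_of_mem_replicate hb).le
      · rcases Multiset.mem_add.mp hb with hb | hb <;> exact hq b hb
    · rw [hcount, if_pos rfl]; omega
    · rw [hcount, if_pos rfl]; exact ⟨q.count l, by omega⟩
    · intro b _ hb
      rw [hcount, if_neg hb]; exact ⟨q.count b, by omega⟩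

theorem Multiset.sum_replicate_self_add_add_self (l : ℕ) (q : Multiset ℕ) :
    (replicate l l + (q + q)).sum = l ^ 2 + 2 * q.sum := by
  rw [sum_add, sum_add, sum_replicate, smul_eq_mul]
  ring

def Nat.Partition.squareAddDouble {l m n : ℕ} (hl : 0 < l) (hn : l ^ 2 + 2 * m = n)
    (q : m.Partition) : n.Partition where
  parts := Multiset.replicate l l + (q.parts + q.parts)
  parts_pos hx := by
    rcases Multiset.mem_add.mp hx with hx | hx
    · rwa [Multiset.eq_of_mem_replicate hx]
    · rcases Multiset.mem_add.mp hx with hx | hx <;> exact q.parts_pos hx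
  parts_sum := by
    rw [Multiset.sum_replicate_self_add_add_self, q.parts_sum, hn]

theorem Nat.Partition.squareAddDouble_injective {l m n : ℕ} (hl : 0 < l)
    (hn : l ^ 2 + 2 * m = n) : Function.Injective (squareAddDouble hl hn) := by
  intro q r h
  have hparts := add_left_cancel (congrArg Nat.Partition.parts h)
  simp only [← two_nsmul] at hparts
  exact Nat.Partition.ext (nsmul_right_injective two_ne_zero hparts)

theorem card_filter_isHarmonicWithMax {l m n : ℕ} (hl : 0 < l) (hn : l ^ 2 + 2 * m = n) :
    #{p : n.Partition | IsHarmonicWithMax l p} = #{q : m.Partition | ∀ x ∈ q.parts, x ≤ l} := by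
  symm
  refine card_nbij (Nat.Partition.squareAddDouble hl hn) (fun q hq => ?_)
    (Nat.Partition.squareAddDouble_injective hl hn).injOn (fun p hp => ?_)
  · simp only [coe_filter, mem_univ, true_and, Set.mem_ofPred_eq] at hq ⊢
    exact (isHarmonicWithMax_iff hl _).mpr ⟨q.parts, hq, rfl⟩
  · simp only [coe_filter, mem_univ, true_and, Set.mem_ofPred_eq] at hp
    obtain ⟨q, hql, hpq⟩ := (isHarmonicWithMax_iff hl p).mp hp
    have hsum : q.sum = m := by
      have hp_sum := p.parts_sum
      rw [hpq, Multiset.sum_replicate_self_add_add_self] at hp_sum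
      omega
    have hpos {x : ℕ} (hx : x ∈ q) : 0 < x := p.parts_pos (by rw [hpq]; simp [hx])
    exact ⟨⟨q, hpos, hsum⟩, by simpa using hql, Nat.Partition.ext hpq.symm⟩

/-- For `l ≥ 1` and `n ≥ l²`, the number of harmonic partitions of `n` with largest
part `l` equals the number of partitions of `(n - l²)/2` into parts of size at most `l`
when `n - l²` is even, and is zero when `n - l²` is odd. -/
theorem harmonic_count_eq_bounded_partitions (l n : ℕ) (hl : 0 < l) (hn : l ^ 2 ≤ n) :
    (Finset.univ.filter fun p : n.Partition => IsHarmonicWithMax l p).card =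
      if (n - l ^ 2) % 2 = 0 then
        (Finset.univ.filter fun p : ((n - l ^ 2) / 2).Partition =>
          ∀ x ∈ p.parts, x ≤ l).card
      else 0 := by
  split_ifs with heven
  · exact card_filter_isHarmonicWithMax hl (by omega)
  · rw [card_eq_zero, filter_eq_empty_iff]
    intro p _ hp
    obtain ⟨q, -, hpq⟩ := (isHarmonicWithMax_iff hl p).mp hp
    have hsum := p.parts_sum
    rw [hpq, Multiset.sum_replicate_self_add_add_self] at hsum
    omega
end

section
/- Let δ be defined on ordinary partitions of n (in multiplicity notation σ = (n_1^{m_1},...,n_k^{m_k}), n_1 > ... > n_k > 0) as follows: split the largest block (n_1)^{m_1} into (n_1-1)^{m_1} and a new single part of size m_1; δ(σ) = 0 if m_1 > n_1 - 1, or if m_1 fits at a position where some multiplicity strictly to its right (among blocks with part size less than m_1, or equal to m_1 for the coincident block) is odd; otherwise δ(σ) is the resulting partition with the new part m_1 inserted in its correct position (merging equal part sizes). Then δ(σ) is a partition of n with one more part than σ (or 0), and δ ∘ δ = 0. -/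
/-- A partition of `n` in multiplicity (block) notation: a list of blocks
`(nᵢ, mᵢ)` with strictly decreasing positive part sizes `nᵢ`, positive
multiplicities `mᵢ`, and `∑ nᵢ · mᵢ = n`. -/
def IsBlockPartition (n : ℕ) (σ : List (ℕ × ℕ)) : Prop :=
  (σ.map Prod.fst).Pairwise (· > ·) ∧ (∀ b ∈ σ, 0 < b.1 ∧ 0 < b.2) ∧
    (σ.map fun b => b.1 * b.2).sum = n

/-- The number of parts (the length) of a block partition. -/
def blockLength (σ : List (ℕ × ℕ)) : ℕ := (σ.map Prod.snd).sum

/-- Insert a single new part of size `p` into a block list, subject to the evenness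
conditions: all multiplicities of blocks at or to the right of the insertion point must
be even (when inserting at the very end there is no condition); returns `none` when the
condition fails. -/
def insertPart (p : ℕ) : List (ℕ × ℕ) → Option (List (ℕ × ℕ))
  | [] => some [(p, 1)]
  | (a, m) :: t =>
    if a < p then
      if ∀ b ∈ (a, m) :: t, Even b.2 then some ((p, 1) :: (a, m) :: t) else none
    else if a = p then
      if ∀ b ∈ (a, m) :: t, Even b.2 then some ((a, m + 1) :: t) else none
    else
      (insertPart p t).map fun t' => (a, m) :: t'

/-- Merge a block onto the front of a block list, combining blocks of equal part
size. -/
def mergeHead (b : ℕ × ℕ) : List (ℕ × ℕ) → List (ℕ × ℕ)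
  | [] => [b]
  | (a, m) :: t => if a = b.1 then (b.1, b.2 + m) :: t else b :: (a, m) :: t

/-- The bosonic coboundary map `δ` on ordinary partitions in block notation: split the
top block `(n₁)^{m₁}` into `(n₁-1)^{m₁}` and a new single part of size `m₁`, which is
inserted in its correct position (merging equal part sizes), provided `m₁ ≤ n₁ - 1` and
all multiplicities at or to the right of the insertion point are even; otherwise `δσ = 0`
(`none`). -/
def deltaB : List (ℕ × ℕ) → Option (List (ℕ × ℕ))
  | [] => none
  | (n1, m1) :: rest =>
    if n1 - 1 < m1 then none
    else (insertPart m1 rest).map (mergeHead (n1 - 1, m1))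

/-- Find the last block with odd multiplicity in a block list; if found at index
`t ≥ 1` (0-based: within this tail), return its part size `n_t` together with the list
in which its multiplicity has been decreased by one (omitting the block if it becomes
empty). -/
def removeLastOdd : List (ℕ × ℕ) → Option (ℕ × List (ℕ × ℕ))
  | [] => none
  | (a, m) :: t =>
    match removeLastOdd t with
    | some (nt, t') => some (nt, (a, m) :: t')
    | none => if ¬ Even m then some (a, if m = 1 then t else (a, m - 1) :: t) else none

/-- The bosonic map `δ*` on ordinary partitions in block notation.  Let `t` be the
maximal index with `m_t` odd (if any).  If `t = 1` or all multiplicities are even: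
`δ*σ = 0` unless `m₁ = n₁ + 2i + 1` for some `i ≥ 0`, in which case
`δ*σ = ((n₁+1)^{n₁}, (n₁)^{2i}, (n₂)^{m₂}, …)` (omitting empty blocks).  If `t ≥ 2`:
`δ*σ = 0` if `n_t > m₁`; otherwise
`δ*σ = ((n₁+1)^{n_t}, (n₁)^{m₁-n_t}, …, (n_t)^{m_t-1}, …)` (omitting empty blocks). -/
def deltaStarB : List (ℕ × ℕ) → Option (List (ℕ × ℕ))
  | [] => none
  | (n1, m1) :: rest =>
    match removeLastOdd rest with
    | some (nt, rest') =>
      if m1 < nt then none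
      else some ((n1 + 1, nt) ::
        (if m1 - nt = 0 then rest' else (n1, m1 - nt) :: rest'))
    | none =>
      if n1 < m1 ∧ ¬ Even (m1 - n1) then
        some ((n1 + 1, n1) ::
          (if m1 - n1 - 1 = 0 then rest else (n1, m1 - n1 - 1) :: rest))
      else none

/-!
Write `σ = (n₁^{m₁}) :: rest`. Then `δσ` merges `(n₁ - 1)^{m₁}` onto the list `t` obtained by
inserting a part `m₁` into `rest`, so sizes and lengths add up at once. The insertion only
succeeds when the block of `t` receiving `m₁` ends up with odd multiplicity. The head of `δσ`
has multiplicity `M ≥ m₁`, so applying `δ` again would insert `M` at or to the left of that odd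
block, which the evenness condition forbids; if instead that block was merged into the head,
the head is `m₁^{M}` with `M > m₁ - 1` and `δ` vanishes by the size condition.
-/

def blockWeight (σ : List (ℕ × ℕ)) : ℕ := (σ.map fun b => b.1 * b.2).sum

@[simp]
lemma blockWeight_nil : blockWeight [] = 0 := rfl

@[simp]
lemma blockWeight_cons (b : ℕ × ℕ) (l : List (ℕ × ℕ)) :
    blockWeight (b :: l) = b.1 * b.2 + blockWeight l := by
  simp [blockWeight]

@[simp]
lemma blockLength_nil : blockLength [] = 0 := rfl

@[simp]
lemma blockLength_cons (b : ℕ × ℕ) (l : List (ℕ × ℕ)) :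
    blockLength (b :: l) = b.2 + blockLength l := by
  simp [blockLength]

lemma isBlockPartition_nil_iff {n : ℕ} : IsBlockPartition n [] ↔ n = 0 := by
  simp [IsBlockPartition, eq_comm]

lemma isBlockPartition_cons_iff {n a m : ℕ} {l : List (ℕ × ℕ)} :
    IsBlockPartition n ((a, m) :: l) ↔
      (∀ b ∈ l, b.1 < a) ∧ 0 < a ∧ 0 < m ∧ IsBlockPartition (blockWeight l) l ∧
        a * m + blockWeight l = n := by
  simp only [IsBlockPartition, List.map_cons, List.pairwise_cons, List.mem_map,
    forall_exists_index, and_imp, forall_apply_eq_imp_iff₂, List.forall_mem_cons,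
    List.sum_cons, blockWeight]
  tauto

section insertPart

variable {p : ℕ} {l t : List (ℕ × ℕ)}

lemma blockWeight_insertPart (h : insertPart p l = some t) :
    blockWeight t = p + blockWeight l := by
  induction l generalizing t with
  | nil => cases h; simp
  | cons b l ih =>
    obtain ⟨a, m⟩ := b
    simp only [insertPart] at h
    split_ifs at h with _ _ heq
    · cases h; simp
    · cases h; subst heq; simp only [blockWeight_cons]; ring
    · obtain ⟨t', h', rfl⟩ := Option.map_eq_some_iff.mp h
      simp only [blockWeight_cons, ih h']; ring

lemma blockLength_insertPart (h : insertPart p l = some t) :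
    blockLength t = blockLength l + 1 := by
  induction l generalizing t with
  | nil => cases h; simp
  | cons b l ih =>
    obtain ⟨a, m⟩ := b
    simp only [insertPart] at h
    split_ifs at h
    · cases h; simp only [blockLength_cons]; ring
    · cases h; simp only [blockLength_cons]; ring
    · obtain ⟨t', h', rfl⟩ := Option.map_eq_some_iff.mp h
      simp only [blockLength_cons, ih h']; ring

lemma insertPart_fst_lt {c : ℕ} (hp : p < c) (hl : ∀ b ∈ l, b.1 < c)
    (h : insertPart p l = some t) : ∀ b ∈ t, b.1 < c := by
  induction l generalizing t with
  | nil => cases h; simpa using hp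
  | cons b l ih =>
    obtain ⟨a, m⟩ := b
    simp only [List.forall_mem_cons] at hl
    simp only [insertPart] at h
    split_ifs at h
    · cases h; simpa [hp] using hl
    · cases h; simpa using hl
    · obtain ⟨t', h', rfl⟩ := Option.map_eq_some_iff.mp h
      simpa [hl.1] using ih hl.2 h'

lemma IsBlockPartition.insertPart {n : ℕ} (hl : IsBlockPartition n l) (hp : 0 < p)
    (h : insertPart p l = some t) : IsBlockPartition (p + n) t := by
  induction l generalizing n t with
  | nil =>
    cases h
    rw [isBlockPartition_nil_iff.mp hl]
    simp [isBlockPartition_cons_iff, isBlockPartition_nil_iff, hp]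
  | cons b l ih =>
    obtain ⟨a, m⟩ := b
    obtain ⟨hlt, ha, hm, hrest, rfl⟩ := isBlockPartition_cons_iff.mp hl
    simp only [_root_.insertPart] at h
    split_ifs at h with hap _ hpa
    · cases h
      refine isBlockPartition_cons_iff.mpr ⟨?_, hp, one_pos, hl, by simp⟩
      simpa [hap] using fun b hb => (hlt b hb).trans hap
    · cases h
      subst hpa
      exact isBlockPartition_cons_iff.mpr ⟨hlt, ha, by omega, hrest, by ring⟩
    · obtain ⟨t', h', rfl⟩ := Option.map_eq_some_iff.mp h
      have hpa : p < a := by omega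
      refine isBlockPartition_cons_iff.mpr
        ⟨insertPart_fst_lt hpa hlt h', ha, hm, ?_, ?_⟩
      · rw [blockWeight_insertPart h']; exact ih hrest h'
      · rw [blockWeight_insertPart h']; ring

lemma exists_odd_mem_of_insertPart (h : insertPart p l = some t) :
    ∃ μ, Odd μ ∧ (p, μ) ∈ t := by
  induction l generalizing t with
  | nil => cases h; exact ⟨1, odd_one, by simp⟩
  | cons b l ih =>
    obtain ⟨a, m⟩ := b
    simp only [insertPart] at h
    split_ifs at h with _ _ heq heven
    · cases h; exact ⟨1, odd_one, by simp⟩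
    · cases h
      subst heq
      exact ⟨m + 1, (heven _ List.mem_cons_self).add_one, by simp⟩
    · obtain ⟨t', h', rfl⟩ := Option.map_eq_some_iff.mp h
      obtain ⟨μ, hμ, hmem⟩ := ih h'
      exact ⟨μ, hμ, List.mem_cons_of_mem _ hmem⟩

lemma insertPart_eq_none_of_odd {b : ℕ × ℕ} (hb : b ∈ l) (hbp : b.1 ≤ p) (hodd : Odd b.2) :
    insertPart p l = none := by
  have hnot : ¬ Even b.2 := Nat.not_even_iff_odd.mpr hodd
  induction l with
  | nil => simp at hb
  | cons c l ih =>
    obtain ⟨a, m⟩ := c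
    simp only [insertPart]
    split_ifs with _ heven _ heven'
    · exact absurd (heven b hb) hnot
    · rfl
    · exact absurd (heven' b hb) hnot
    · rfl
    · rcases List.mem_cons.mp hb with rfl | hb
      · omega
      · simp [ih hb]

end insertPart

section mergeHead

lemma blockWeight_mergeHead (b : ℕ × ℕ) (l : List (ℕ × ℕ)) :
    blockWeight (mergeHead b l) = b.1 * b.2 + blockWeight l := by
  cases l with
  | nil => simp [mergeHead]
  | cons c l =>
    obtain ⟨a, m⟩ := c
    by_cases h : a = b.1
    · simp only [mergeHead, h, if_true, blockWeight_cons]; ring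
    · simp [mergeHead, h]

lemma blockLength_mergeHead (b : ℕ × ℕ) (l : List (ℕ × ℕ)) :
    blockLength (mergeHead b l) = b.2 + blockLength l := by
  cases l with
  | nil => simp [mergeHead]
  | cons c l =>
    obtain ⟨a, m⟩ := c
    by_cases h : a = b.1
    · simp only [mergeHead, h, if_true, blockLength_cons]; ring
    · simp [mergeHead, h]

lemma IsBlockPartition.mergeHead {n a m : ℕ} {l : List (ℕ × ℕ)} (hl : IsBlockPartition n l)
    (ha : 0 < a) (hm : 0 < m) (hle : ∀ b ∈ l, b.1 ≤ a) :
    IsBlockPartition (a * m + n) (mergeHead (a, m) l) := by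
  cases l with
  | nil =>
    rw [isBlockPartition_nil_iff.mp hl]
    simpa [_root_.mergeHead, isBlockPartition_cons_iff, isBlockPartition_nil_iff] using ⟨ha, hm⟩
  | cons c l =>
    obtain ⟨c, k⟩ := c
    obtain ⟨hlt, hc, hk, hrest, rfl⟩ := isBlockPartition_cons_iff.mp hl
    have hca : c ≤ a := hle _ List.mem_cons_self
    by_cases h : c = a
    · subst h
      simp only [_root_.mergeHead, if_true]
      exact isBlockPartition_cons_iff.mpr ⟨hlt, ha, by omega, hrest, by ring⟩
    · simp only [_root_.mergeHead, h, if_false]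
      refine isBlockPartition_cons_iff.mpr ⟨?_, ha, hm, hl, by simp⟩
      simpa [lt_of_le_of_ne hca h] using fun b hb => (hlt b hb).trans_le hca

end mergeHead

section deltaB

lemma deltaB_cons_eq_some_iff {a m : ℕ} {l τ : List (ℕ × ℕ)} :
    deltaB ((a, m) :: l) = some τ ↔
      m ≤ a - 1 ∧ ∃ t, insertPart m l = some t ∧ τ = mergeHead (a - 1, m) t := by
  simp only [deltaB]
  split_ifs with h
  · simp [h]
  · simp [eq_comm, not_lt.mp h]

lemma deltaB_cons_eq_none_of_odd {a m : ℕ} {l : List (ℕ × ℕ)} {b : ℕ × ℕ} (hb : b ∈ l)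
    (hbm : b.1 ≤ m) (hodd : Odd b.2) : deltaB ((a, m) :: l) = none := by
  simp [deltaB, insertPart_eq_none_of_odd hb hbm hodd]

lemma deltaB_mergeHead_eq_none {b : ℕ × ℕ} {l : List (ℕ × ℕ)} {μ : ℕ}
    (hmem : (b.2, μ) ∈ l) (hodd : Odd μ) : deltaB (mergeHead b l) = none := by
  obtain ⟨a, m⟩ := b
  cases l with
  | nil => simp at hmem
  | cons c l =>
    obtain ⟨c, k⟩ := c
    by_cases h : c = a
    · simp only [mergeHead, h, if_true]
      rcases List.mem_cons.mp hmem with hc | hl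
      · obtain ⟨rfl, rfl⟩ := Prod.mk.inj hc
        have : 0 < μ := hodd.pos
        simp only [deltaB]
        exact if_pos (by omega)
      · exact deltaB_cons_eq_none_of_odd hl (by simp) hodd
    · simp only [mergeHead, h, if_false]
      exact deltaB_cons_eq_none_of_odd hmem le_rfl hodd

variable {n : ℕ} {σ τ : List (ℕ × ℕ)}

lemma IsBlockPartition.deltaB (hσ : IsBlockPartition n σ) (h : deltaB σ = some τ) :
    IsBlockPartition n τ := by
  match σ with
  | [] => simp [_root_.deltaB] at h
  | (a, m) :: l =>
    obtain ⟨hm, t, ht, rfl⟩ := deltaB_cons_eq_some_iff.mp h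
    obtain ⟨hlt, ha, hm0, hl, rfl⟩ := isBlockPartition_cons_iff.mp hσ
    have hsplit : a * m + blockWeight l = (a - 1) * m + (m + blockWeight l) := by
      rw [Nat.sub_one_mul]
      have := Nat.le_mul_of_pos_left m ha
      omega
    rw [hsplit]
    refine (hl.insertPart hm0 ht).mergeHead (by omega) hm0 fun b hb => ?_
    have := insertPart_fst_lt (by omega) hlt ht b hb
    omega

lemma blockLength_deltaB (h : deltaB σ = some τ) : blockLength τ = blockLength σ + 1 := by
  match σ with
  | [] => simp [deltaB] at h
  | (a, m) :: l =>
    obtain ⟨-, t, ht, rfl⟩ := deltaB_cons_eq_some_iff.mp h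
    simp only [blockLength_mergeHead, blockLength_insertPart ht, blockLength_cons]
    ring

lemma deltaB_deltaB (h : deltaB σ = some τ) : deltaB τ = none := by
  match σ with
  | [] => simp [deltaB] at h
  | (a, m) :: l =>
    obtain ⟨-, t, ht, rfl⟩ := deltaB_cons_eq_some_iff.mp h
    obtain ⟨μ, hodd, hmem⟩ := exists_odd_mem_of_insertPart ht
    exact deltaB_mergeHead_eq_none hmem hodd

end deltaB

/-- `δ` maps a partition of `n` to a partition of `n` with one more part (or to `0`,
i.e. `none`), and `δ ∘ δ = 0`. -/
theorem deltaB_wellDefined_and_sq_zero (n : ℕ) (σ : List (ℕ × ℕ))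
    (hσ : IsBlockPartition n σ) :
    (∀ τ, deltaB σ = some τ →
      IsBlockPartition n τ ∧ blockLength τ = blockLength σ + 1) ∧
    (∀ τ, deltaB σ = some τ → deltaB τ = none) :=
  ⟨fun _ h => ⟨hσ.deltaB h, blockLength_deltaB h⟩, fun _ h => deltaB_deltaB h⟩
end

section
/- With δ and δ* defined on ordinary partitions of n as in the bosonic setting, for partitions σ, τ of n: (i) if δ(σ) = τ ≠ 0 then δ*(τ) = σ, and (ii) if δ*(τ) = σ ≠ 0 then δ(σ) = τ. Moreover δ* ∘ δ* = 0. -/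
/-!
On partitions, `removeLastOdd` is exactly the inverse of `insertPart p`: it deletes the
inserted part `p` again. Both cases of `δ*` are then one rule:
`δ*(N^M, rest) = ((N+1)^p, X)` where `p ≤ M` and `removeLastOdd` deletes a part `p` from
`(N^(M-p), rest)`, leaving `X`. Read backwards, this is `δ` splitting `(N+1)^p` into
`N^p` and a new part `p`, which gives both adjointness statements.

For `δ* ∘ δ* = 0`: once the last odd block, at part `p`, has lost a part, all blocks of
size `≤ p` have even multiplicity, so a second `δ*` would remove a part `q > p`, while the
promoted block `(N+1)^p` forces `q ≤ p` (or `q = N + 1 > p`).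
-/

def takeFromHead (k : ℕ) : List (ℕ × ℕ) → List (ℕ × ℕ)
  | [] => []
  | (a, m) :: t => if m - k = 0 then t else (a, m - k) :: t

theorem even_sub_one_of_not_even {m : ℕ} (hm : ¬ Even m) : Even (m - 1) := by
  obtain ⟨k, rfl⟩ := Nat.not_even_iff_odd.1 hm; simp

theorem removeLastOdd_cons_eq_some_iff {a m p : ℕ} {t l : List (ℕ × ℕ)} :
    removeLastOdd ((a, m) :: t) = some (p, l) ↔
      (∃ t', removeLastOdd t = some (p, t') ∧ l = (a, m) :: t') ∨
      (removeLastOdd t = none ∧ ¬ Even m ∧ p = a ∧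
        l = if m = 1 then t else (a, m - 1) :: t) := by
  cases h : removeLastOdd t with
  | some v => obtain ⟨q, t'⟩ := v; simp [removeLastOdd, h, eq_comm]
  | none => by_cases hm : Even m <;> simp [removeLastOdd, h, hm, eq_comm]

theorem removeLastOdd_eq_none_iff {l : List (ℕ × ℕ)} :
    removeLastOdd l = none ↔ ∀ b ∈ l, Even b.2 := by
  induction l with
  | nil => simp [removeLastOdd]
  | cons b t ih =>
    obtain ⟨a, m⟩ := b
    cases h : removeLastOdd t with
    | some v => simp_all [removeLastOdd]
    | none => by_cases hm : Even m <;> simp_all [removeLastOdd, ih.1 h]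

theorem fst_mem_of_removeLastOdd {l l' : List (ℕ × ℕ)} {p : ℕ}
    (h : removeLastOdd l = some (p, l')) : p ∈ l.map Prod.fst := by
  induction l generalizing l' with
  | nil => simp [removeLastOdd] at h
  | cons b t ih =>
    obtain ⟨a, m⟩ := b
    rcases removeLastOdd_cons_eq_some_iff.1 h with ⟨t', ht, -⟩ | ⟨-, -, rfl, -⟩
    · exact List.mem_cons_of_mem _ (ih ht)
    · exact List.mem_cons_self

theorem forall_pos_of_removeLastOdd {l l' : List (ℕ × ℕ)} {p : ℕ}
    (h : removeLastOdd l = some (p, l')) (hl' : ∀ b ∈ l', 0 < b.2) : ∀ b ∈ l, 0 < b.2 := by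
  induction l generalizing l' with
  | nil => simp [removeLastOdd] at h
  | cons b t ih =>
    obtain ⟨a, m⟩ := b
    rcases removeLastOdd_cons_eq_some_iff.1 h with ⟨t', ht, rfl⟩ | ⟨-, hm, -, rfl⟩
    · simp only [List.forall_mem_cons] at hl' ⊢
      exact ⟨hl'.1, ih ht hl'.2⟩
    · have hm0 : 0 < m := Nat.pos_of_ne_zero (by rintro rfl; exact hm Even.zero)
      refine List.forall_mem_cons.2 ⟨hm0, fun b hb => ?_⟩
      split_ifs at hl'
      · exact hl' b hb
      · exact hl' b (List.mem_cons_of_mem _ hb)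

theorem lt_of_removeLastOdd_removeLastOdd {l l' l'' : List (ℕ × ℕ)} {p q : ℕ}
    (hs : (l.map Prod.fst).Pairwise (· > ·)) (h : removeLastOdd l = some (p, l'))
    (h' : removeLastOdd l' = some (q, l'')) : p < q := by
  induction l generalizing l' l'' p with
  | nil => simp [removeLastOdd] at h
  | cons b t ih =>
    obtain ⟨a, m⟩ := b
    simp only [List.map_cons, List.pairwise_cons] at hs
    rcases removeLastOdd_cons_eq_some_iff.1 h with ⟨t', ht, rfl⟩ | ⟨ht, hm, -, rfl⟩
    · rcases removeLastOdd_cons_eq_some_iff.1 h' with ⟨t'', ht', -⟩ | ⟨-, -, rfl, -⟩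
      · exact ih hs.2 ht ht'
      · exact hs.1 p (fst_mem_of_removeLastOdd ht)
    · -- removing the last odd part leaves only even multiplicities
      have ht' := removeLastOdd_eq_none_iff.1 ht
      suffices removeLastOdd (if m = 1 then t else (a, m - 1) :: t) = none by simp_all
      refine removeLastOdd_eq_none_iff.2 ?_
      split_ifs
      · exact ht'
      · exact List.forall_mem_cons.2 ⟨even_sub_one_of_not_even hm, ht'⟩

theorem removeLastOdd_of_insertPart {p : ℕ} {rest r : List (ℕ × ℕ)}
    (hpos : ∀ b ∈ rest, 0 < b.2) (h : insertPart p rest = some r) :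
    removeLastOdd r = some (p, rest) := by
  induction rest generalizing r with
  | nil =>
    simp only [insertPart, Option.some.injEq] at h
    subst h; simp [removeLastOdd]
  | cons b t ih =>
    obtain ⟨a, m⟩ := b
    rw [insertPart] at h
    split_ifs at h with hap hev hap' hev'
    · cases h
      exact removeLastOdd_cons_eq_some_iff.2 <|
        Or.inr ⟨removeLastOdd_eq_none_iff.2 hev, by simp, rfl, by simp⟩
    · cases h
      have hm : 0 < m := (hpos _ List.mem_cons_self)
      have ⟨hm', ht⟩ := List.forall_mem_cons.1 hev'
      exact removeLastOdd_cons_eq_some_iff.2 <|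
        Or.inr ⟨removeLastOdd_eq_none_iff.2 ht, by simpa [Nat.even_add_one] using hm', hap'.symm,
          by simp [hm.ne']⟩
    · obtain ⟨t', ht', rfl⟩ := Option.map_eq_some_iff.1 h
      exact removeLastOdd_cons_eq_some_iff.2 <|
        Or.inl ⟨t, ih (fun b hb => hpos b (List.mem_cons_of_mem _ hb)) ht', rfl⟩

theorem insertPart_of_removeLastOdd {p : ℕ} {rest r : List (ℕ × ℕ)}
    (hs : (r.map Prod.fst).Pairwise (· > ·)) (h : removeLastOdd r = some (p, rest)) :
    insertPart p rest = some r := by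
  induction r generalizing rest with
  | nil => simp [removeLastOdd] at h
  | cons b t ih =>
    obtain ⟨a, m⟩ := b
    simp only [List.map_cons, List.pairwise_cons] at hs
    rcases removeLastOdd_cons_eq_some_iff.1 h with ⟨t', ht, rfl⟩ | ⟨ht, hm, rfl, rfl⟩
    · have hpa : p < a := hs.1 p (fst_mem_of_removeLastOdd ht)
      simp [insertPart, ih hs.2 ht, not_lt.2 hpa.le, hpa.ne']
    · have hev := removeLastOdd_eq_none_iff.1 ht
      split_ifs with hm1
      · cases t with
        | nil => simp [insertPart, hm1]
        | cons c t =>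
          have hc : c.1 < p := hs.1 c.1 (by simp)
          simpa [insertPart, hc, hm1] using hev
      · have hm0 : m ≠ 0 := by rintro rfl; exact hm Even.zero
        simpa [insertPart, Nat.sub_add_cancel (Nat.one_le_iff_ne_zero.2 hm0),
          even_sub_one_of_not_even hm] using hev

theorem map_fst_takeFromHead_sublist (k : ℕ) (l : List (ℕ × ℕ)) :
    ((takeFromHead k l).map Prod.fst).Sublist (l.map Prod.fst) := by
  cases l with
  | nil => simp [takeFromHead]
  | cons b t =>
    obtain ⟨a, m⟩ := b
    simp only [takeFromHead]
    split_ifs <;> simp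

theorem le_of_mem_map_fst_cons {N M a : ℕ} {rest : List (ℕ × ℕ)}
    (hs : (((N, M) :: rest).map Prod.fst).Pairwise (· > ·))
    (ha : a ∈ ((N, M) :: rest).map Prod.fst) : a ≤ N := by
  rw [List.map_cons, List.pairwise_cons] at hs
  rcases List.mem_cons.1 ha with rfl | ha
  · exact le_rfl
  · exact (hs.1 a ha).le

theorem mergeHead_takeFromHead {N M p : ℕ} {rest : List (ℕ × ℕ)}
    (hN : N ∉ rest.map Prod.fst) (hpM : p ≤ M) :
    mergeHead (N, p) (takeFromHead p ((N, M) :: rest)) = (N, M) :: rest := by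
  by_cases hM : M - p = 0
  · obtain rfl : M = p := by omega
    cases rest with
    | nil => simp [takeFromHead, mergeHead]
    | cons b t =>
      obtain ⟨a, m⟩ := b
      have haN : a ≠ N := fun h => hN (by simp [h])
      simp [takeFromHead, mergeHead, haN]
  · simp [takeFromHead, mergeHead, hM]
    omega

theorem takeFromHead_mergeHead {N p : ℕ} {r : List (ℕ × ℕ)} (hr : ∀ b ∈ r, 0 < b.2) :
    takeFromHead p (mergeHead (N, p) r) = r := by
  cases r with
  | nil => simp [takeFromHead, mergeHead]
  | cons b t =>
    obtain ⟨a, m⟩ := b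
    have hm : 0 < m := hr _ List.mem_cons_self
    by_cases haN : a = N
    · simp [takeFromHead, mergeHead, haN, hm.ne']
    · simp [takeFromHead, mergeHead, haN]

theorem exists_mergeHead_eq_cons (N p : ℕ) (r : List (ℕ × ℕ)) :
    ∃ M t, p ≤ M ∧ mergeHead (N, p) r = (N, M) :: t := by
  cases r with
  | nil => exact ⟨p, [], le_rfl, rfl⟩
  | cons b t =>
    obtain ⟨a, m⟩ := b
    by_cases haN : a = N
    · exact ⟨p + m, t, by omega, by simp [mergeHead, haN]⟩
    · exact ⟨p, (a, m) :: t, le_rfl, by simp [mergeHead, haN]⟩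

theorem deltaStarB_cons_eq_some_iff {N M : ℕ} {rest σ : List (ℕ × ℕ)} :
    deltaStarB ((N, M) :: rest) = some σ ↔
      ∃ p X, p ≤ M ∧ removeLastOdd (takeFromHead p ((N, M) :: rest)) = some (p, X) ∧
        σ = (N + 1, p) :: X := by
  constructor
  · intro h
    simp only [deltaStarB] at h
    cases hr : removeLastOdd rest with
    | some v =>
      obtain ⟨q, rest'⟩ := v
      simp only [hr] at h
      by_cases hMq : M < q
      · rw [if_pos hMq] at h; cases h
      rw [if_neg hMq, Option.some.injEq] at h
      subst h
      refine ⟨q, _, not_lt.1 hMq, ?_, rfl⟩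
      simp only [takeFromHead]
      split_ifs
      · exact hr
      · exact removeLastOdd_cons_eq_some_iff.2 (Or.inl ⟨rest', hr, rfl⟩)
    | none =>
      simp only [hr] at h
      by_cases hc : N < M ∧ ¬ Even (M - N)
      swap
      · rw [if_neg hc] at h; cases h
      rw [if_pos hc, Option.some.injEq] at h
      subst h
      have hMN : M - N ≠ 0 := fun h0 => hc.2 (h0 ▸ Even.zero)
      refine ⟨N, _, hc.1.le, ?_, rfl⟩
      simp only [takeFromHead, if_neg hMN]
      refine removeLastOdd_cons_eq_some_iff.2 (Or.inr ⟨hr, hc.2, rfl, ?_⟩)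
      split_ifs <;> first | rfl | omega
  · rintro ⟨p, X, hpM, hY, rfl⟩
    simp only [takeFromHead] at hY
    split_ifs at hY with hMp
    · simp [deltaStarB, hY, hMp, not_lt.2 hpM]
    · rcases removeLastOdd_cons_eq_some_iff.1 hY with ⟨t', ht, rfl⟩ | ⟨ht, hodd, rfl, rfl⟩
      · simp [deltaStarB, ht, hMp, not_lt.2 hpM]
      · have hpM' : p < M := by omega
        simp only [deltaStarB, ht, hpM', hodd, not_false_eq_true, and_self, if_true]
        split_ifs <;> first | rfl | omega

theorem deltaStarB_mergeHead {N p : ℕ} {r X : List (ℕ × ℕ)}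
    (hr : removeLastOdd r = some (p, X)) (hX : ∀ b ∈ X, 0 < b.2) :
    deltaStarB (mergeHead (N, p) r) = some ((N + 1, p) :: X) := by
  obtain ⟨M, t, hpM, he⟩ := exists_mergeHead_eq_cons N p r
  rw [he, deltaStarB_cons_eq_some_iff]
  refine ⟨p, X, hpM, ?_, rfl⟩
  rwa [← he, takeFromHead_mergeHead (forall_pos_of_removeLastOdd hr hX)]

theorem deltaStarB_of_deltaB {σ τ : List (ℕ × ℕ)} (hσ : ∀ b ∈ σ, 0 < b.2)
    (h : deltaB σ = some τ) : deltaStarB τ = some σ := by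
  cases σ with
  | nil => simp [deltaB] at h
  | cons b rest =>
    obtain ⟨n1, m1⟩ := b
    simp only [deltaB] at h
    split_ifs at h with hm
    obtain ⟨r, hr, rfl⟩ := Option.map_eq_some_iff.1 h
    have hm1 : 0 < m1 := hσ _ List.mem_cons_self
    have hrest : ∀ b ∈ rest, 0 < b.2 := fun b hb => hσ b (List.mem_cons_of_mem _ hb)
    have := deltaStarB_mergeHead (N := n1 - 1) (removeLastOdd_of_insertPart hrest hr) hrest
    rwa [Nat.sub_add_cancel (by omega : 1 ≤ n1)] at this

theorem deltaB_of_deltaStarB {σ τ : List (ℕ × ℕ)} (hτ : (τ.map Prod.fst).Pairwise (· > ·))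
    (h : deltaStarB τ = some σ) : deltaB σ = some τ := by
  cases τ with
  | nil => simp [deltaStarB] at h
  | cons b rest =>
    obtain ⟨N, M⟩ := b
    obtain ⟨p, X, hpM, hY, rfl⟩ := deltaStarB_cons_eq_some_iff.1 h
    have hYs := hτ.sublist (map_fst_takeFromHead_sublist p _)
    have hpN := le_of_mem_map_fst_cons hτ
      ((map_fst_takeFromHead_sublist p _).subset (fst_mem_of_removeLastOdd hY))
    rw [List.map_cons, List.pairwise_cons] at hτ
    have hN : N ∉ rest.map Prod.fst := fun h => lt_irrefl N (hτ.1 N h)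
    simp [deltaB, not_lt.2 hpN, insertPart_of_removeLastOdd hYs hY, mergeHead_takeFromHead hN hpM]

theorem deltaStarB_deltaStarB {σ ρ : List (ℕ × ℕ)} (hσ : (σ.map Prod.fst).Pairwise (· > ·))
    (h : deltaStarB σ = some ρ) : deltaStarB ρ = none := by
  cases σ with
  | nil => simp [deltaStarB] at h
  | cons b rest =>
    obtain ⟨N, M⟩ := b
    obtain ⟨p, X, -, hY, rfl⟩ := deltaStarB_cons_eq_some_iff.1 h
    have hYs := hσ.sublist (map_fst_takeFromHead_sublist p _)
    have hpN := le_of_mem_map_fst_cons hσ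
      ((map_fst_takeFromHead_sublist p _).subset (fst_mem_of_removeLastOdd hY))
    refine Option.eq_none_iff_forall_ne_some.2 fun ρ' h' => ?_
    obtain ⟨q, X', hqp, hX, -⟩ := deltaStarB_cons_eq_some_iff.1 h'
    simp only [takeFromHead] at hX
    split_ifs at hX with hpq
    · obtain rfl : q = p := by omega
      exact lt_irrefl q (lt_of_removeLastOdd_removeLastOdd hYs hY hX)
    · rcases removeLastOdd_cons_eq_some_iff.1 hX with ⟨_, hX', -⟩ | ⟨-, -, rfl, -⟩
      · have := lt_of_removeLastOdd_removeLastOdd hYs hY hX'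
        omega
      · omega

/-- Adjointness of the bosonic `δ` and `δ*`: for partitions `σ, τ` of `n`,
(i) `δσ = τ ≠ 0` implies `δ*τ = σ`, (ii) `δ*τ = σ ≠ 0` implies `δσ = τ`;
moreover `δ* ∘ δ* = 0`. -/
theorem deltaB_deltaStarB_adjoint_and_sq_zero (n : ℕ) :
    (∀ σ τ : List (ℕ × ℕ), IsBlockPartition n σ → IsBlockPartition n τ →
      (deltaB σ = some τ → deltaStarB τ = some σ) ∧
      (deltaStarB τ = some σ → deltaB σ = some τ)) ∧
    (∀ σ ρ : List (ℕ × ℕ), IsBlockPartition n σ →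
      deltaStarB σ = some ρ → deltaStarB ρ = none) :=
  ⟨fun _ _ hσ hτ =>
    ⟨deltaStarB_of_deltaB fun b hb => (hσ.2.1 b hb).2, deltaB_of_deltaStarB hτ.1⟩,
   fun _ _ hσ => deltaStarB_deltaStarB hσ.1⟩
end
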